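/- arXiv:1906.08080 — 5 statements merged into one kernel-verified Lean document; each statement's English description precedes it below -/
import Mathlib

section
/- There is a constant C > 0 depending only on p such that the following holds. Let p ∈ (0,1] and 1 ≤ K ≤ N be integers, and let A be an N×N real matrix all of whose entries belong to {0, 1/N} satisfying conditions (a), (b), (c) below. Let ρ be the spectral radius of A and let V ∈ ℝ^N satisfy A·V = ρ·V, V(i) > 0 for every i, and ‖V‖₂ = √N. Then (N/K)·Σ_{i=1}^K (V(i) − V̄^K)² ≤ C·N^{1/4}, where V̄^K = (1/K)Σ_{i=1}^K V(i). -/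
open Finset Matrix

noncomputable section

/-- there is `C > 0` depending only on `p` such that for any `N ≥ K ≥ 1`,
any `{0,1/N}`-valued matrix `A` satisfying the conditions defining `Ω_N^{K,2}`, and
any positive eigenvector `V` (with `‖V‖₂ = √N`) of `A` for its spectral radius `ρ`,
one has `(N/K)·Σ_{i=1}^K (V(i) − V̄^K)² ≤ C·N^{1/4}`. -/
theorem stmt_8 (p : ℝ) (hp : 0 < p) (hp1 : p ≤ 1) :
    ∃ C > 0, ∀ (N K : ℕ), 1 ≤ K → K ≤ N →
      ∀ A : Matrix (Fin N) (Fin N) ℝ,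
        (∀ i j, A i j = 0 ∨ A i j = 1 / N) →
        (p / 2 < (∑ i, ∑ j, A i j) / N) →
        (∀ i j, |(N : ℝ) * (A * A) i j - p ^ 2| < p ^ 2 / (2 * (N : ℝ) ^ ((3 : ℝ) / 8))) →
        (p / 2 < (∑ i ∈ Finset.univ.filter (fun i : Fin N => (i : ℕ) < K), ∑ j, A i j) / K) →
        ∀ (ρ : ℝ) (V : Fin N → ℝ),
          A.mulVec V = ρ • V →
          (∀ i, 0 < V i) →
          Real.sqrt (∑ i, V i ^ 2) = Real.sqrt N →
          ((N : ℝ) / K) *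
            (∑ i ∈ Finset.univ.filter (fun i : Fin N => (i : ℕ) < K),
              (V i - (∑ i' ∈ Finset.univ.filter (fun i' : Fin N => (i' : ℕ) < K), V i') / K) ^ 2)
            ≤ C * (N : ℝ) ^ ((1 : ℝ) / 4) := by
  refine ⟨4, by norm_num, ?_⟩
  intro N K hK hKN A hA ha hb hc ρ V hAV hVpos hVnorm
  have hN1 : 1 ≤ N := le_trans hK hKN
  haveI : NeZero N := ⟨by omega⟩
  have hNpos : (0:ℝ) < N := by exact_mod_cast Nat.lt_of_lt_of_le Nat.zero_lt_one hN1
  have hKpos : (0:ℝ) < K := by exact_mod_cast hK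
  -- notation
  set X : ℝ := (N:ℝ) ^ ((3:ℝ)/8) with hXdef
  have hXpos : 0 < X := Real.rpow_pos_of_pos hNpos _
  have hX1 : 1 ≤ X := Real.one_le_rpow (by exact_mod_cast hN1) (by norm_num)
  set δ : ℝ := p ^ 2 / (2 * X) with hδdef
  have hδpos : 0 < δ := by positivity
  have hδle : δ ≤ p ^ 2 / 2 := by
    rw [hδdef]
    calc p ^ 2 / (2 * X) ≤ p ^ 2 / (2 * 1) := by gcongr
      _ = p ^ 2 / 2 := by norm_num
  set T : ℝ := ∑ j, V j with hTdef
  have hT : 0 < T := Finset.sum_pos (fun i _ => hVpos i) univ_nonempty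
  -- ∑ V² = N
  have hsq : ∑ i, V i ^ 2 = (N:ℝ) := by
    have h1 : (0:ℝ) ≤ ∑ i, V i ^ 2 := Finset.sum_nonneg fun i _ => sq_nonneg _
    calc ∑ i, V i ^ 2 = Real.sqrt (∑ i, V i ^ 2) ^ 2 := (Real.sq_sqrt h1).symm
      _ = Real.sqrt N ^ 2 := by rw [hVnorm]
      _ = (N:ℝ) := Real.sq_sqrt (Nat.cast_nonneg N)
  -- T ≤ N by Cauchy–Schwarz
  have hTN : T ≤ (N:ℝ) := by
    have hcs := Finset.sum_mul_sq_le_sq_mul_sq Finset.univ (fun _ => (1:ℝ)) V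
    simp only [one_pow, one_mul, Finset.sum_const, Finset.card_univ, Fintype.card_fin,
      nsmul_eq_mul, mul_one] at hcs
    rw [hsq] at hcs
    nlinarith [hT, hNpos]
  -- A² V = ρ² V
  have hA2V : ∀ i, ∑ j, (A * A) i j * V j = ρ * ρ * V i := by
    intro i
    have h : (A * A).mulVec V = (ρ * ρ) • V := by
      rw [← Matrix.mulVec_mulVec, hAV, Matrix.mulVec_smul, hAV, smul_smul]
    have := congrFun h i
    simpa [Matrix.mulVec, dotProduct, smul_eq_mul] using this
  -- key entrywise bound
  have key : ∀ i, |(N:ℝ) * (ρ * ρ * V i) - p ^ 2 * T| ≤ δ * T := by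
    intro i
    rw [← hA2V i]
    have expand : (N:ℝ) * (∑ j, (A * A) i j * V j) - p ^ 2 * T
        = ∑ j, (((N:ℝ) * (A * A) i j - p ^ 2) * V j) := by
      rw [hTdef, Finset.mul_sum, Finset.mul_sum, ← Finset.sum_sub_distrib]
      exact Finset.sum_congr rfl fun j _ => by ring
    rw [expand]
    calc |∑ j, (((N:ℝ) * (A * A) i j - p ^ 2) * V j)|
        ≤ ∑ j, |((N:ℝ) * (A * A) i j - p ^ 2) * V j| := Finset.abs_sum_le_sum_abs _ _
      _ ≤ ∑ j, δ * V j := by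
          refine Finset.sum_le_sum fun j _ => ?_
          rw [abs_mul, abs_of_pos (hVpos j)]
          exact mul_le_mul_of_nonneg_right (le_of_lt (hb i j)) (le_of_lt (hVpos j))
      _ = δ * T := by rw [hTdef, Finset.mul_sum]
  -- bound on ρ²
  have hsumkey : |(N:ℝ) * (ρ * ρ) * T - (N:ℝ) * (p ^ 2 * T)| ≤ (N:ℝ) * (δ * T) := by
    have h1 : (N:ℝ) * (ρ * ρ) * T - (N:ℝ) * (p ^ 2 * T)
        = ∑ i : Fin N, ((N:ℝ) * (ρ * ρ * V i) - p ^ 2 * T) := by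
      rw [Finset.sum_sub_distrib, Finset.sum_const, Finset.card_univ, Fintype.card_fin,
        nsmul_eq_mul]
      have : ∑ i : Fin N, (N:ℝ) * (ρ * ρ * V i) = (N:ℝ) * (ρ * ρ) * T := by
        rw [hTdef, ← Finset.mul_sum, Finset.mul_sum, Finset.mul_sum]
        exact Finset.sum_congr rfl fun j _ => by ring
      rw [this]
    rw [h1]
    calc |∑ i : Fin N, ((N:ℝ) * (ρ * ρ * V i) - p ^ 2 * T)|
        ≤ ∑ i : Fin N, |(N:ℝ) * (ρ * ρ * V i) - p ^ 2 * T| := Finset.abs_sum_le_sum_abs _ _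
      _ ≤ ∑ _i : Fin N, δ * T := Finset.sum_le_sum fun i _ => key i
      _ = (N:ℝ) * (δ * T) := by
          rw [Finset.sum_const, Finset.card_univ, Fintype.card_fin, nsmul_eq_mul]
  have hρ2 : p ^ 2 / 2 ≤ ρ * ρ := by
    have h2 := (abs_le.mp hsumkey).1
    have hNT : 0 < (N:ℝ) * T := mul_pos hNpos hT
    nlinarith [hδle]
  have hNρ : 0 < (N:ℝ) * (ρ * ρ) := mul_pos hNpos (lt_of_lt_of_le (by positivity) hρ2)
  -- entrywise bounds on V
  set D : ℝ := (p ^ 2 * T + δ * T) / ((N:ℝ) * (ρ * ρ)) with hDdef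
  set m : ℝ := (p ^ 2 * T - δ * T) / ((N:ℝ) * (ρ * ρ)) with hmdef
  have hup : ∀ i, V i ≤ D := by
    intro i
    rw [hDdef, le_div_iff₀ hNρ]
    have h2 := (abs_le.mp (key i)).2
    have : V i * ((N:ℝ) * (ρ * ρ)) = (N:ℝ) * (ρ * ρ * V i) := by ring
    linarith
  have hlo : ∀ i, m ≤ V i := by
    intro i
    rw [hmdef, div_le_iff₀ hNρ]
    have h2 := (abs_le.mp (key i)).1
    have : V i * ((N:ℝ) * (ρ * ρ)) = (N:ℝ) * (ρ * ρ * V i) := by ring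
    linarith
  have hDm : D - m ≤ 2 / X := by
    have h1 : D - m = 2 * δ * T / ((N:ℝ) * (ρ * ρ)) := by
      rw [hDdef, hmdef, div_sub_div_same]; congr 1; ring
    rw [h1, div_le_div_iff₀ hNρ hXpos]
    have hδX : δ * X = p ^ 2 / 2 := by
      rw [hδdef]; field_simp
    nlinarith [hρ2, hTN, hT, hNpos, hp, sq_nonneg p]
  -- the filtered set
  set s : Finset (Fin N) := Finset.univ.filter (fun i : Fin N => (i : ℕ) < K) with hs
  have hcard : s.card = K := by
    have himg : s.image Fin.val = Finset.range K := by
      ext x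
      simp only [Finset.mem_image, Finset.mem_range, hs, Finset.mem_filter, Finset.mem_univ,
        true_and]
      constructor
      · rintro ⟨i, hi, rfl⟩; exact hi
      · intro hx; exact ⟨⟨x, lt_of_lt_of_le hx hKN⟩, hx, rfl⟩
    have := Finset.card_image_of_injective s Fin.val_injective
    rw [himg, Finset.card_range] at this
    omega
  set Vb : ℝ := (∑ i' ∈ s, V i') / K with hVb
  have hVbup : Vb ≤ D := by
    rw [hVb, div_le_iff₀ hKpos]
    calc ∑ i' ∈ s, V i' ≤ ∑ _i' ∈ s, D := Finset.sum_le_sum fun i _ => hup i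
      _ = D * K := by rw [Finset.sum_const, hcard, nsmul_eq_mul]; ring
  have hVblo : m ≤ Vb := by
    rw [hVb, le_div_iff₀ hKpos]
    calc m * K = ∑ _i' ∈ s, m := by rw [Finset.sum_const, hcard, nsmul_eq_mul]; ring
      _ ≤ ∑ i' ∈ s, V i' := Finset.sum_le_sum fun i _ => hlo i
  -- per-term bound
  have hterm : ∀ i ∈ s, (V i - Vb) ^ 2 ≤ (2 / X) ^ 2 := by
    intro i _
    refine sq_le_sq' ?_ ?_
    · have := hlo i; have := hVbup; linarith
    · have := hup i; have := hVblo; linarith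
  have hsum : ∑ i ∈ s, (V i - Vb) ^ 2 ≤ (K:ℝ) * (2 / X) ^ 2 := by
    calc ∑ i ∈ s, (V i - Vb) ^ 2 ≤ ∑ _i ∈ s, (2 / X) ^ 2 := Finset.sum_le_sum hterm
      _ = (K:ℝ) * (2 / X) ^ 2 := by rw [Finset.sum_const, hcard, nsmul_eq_mul]
  -- final arithmetic
  have hX2 : X ^ 2 = (N:ℝ) ^ ((3:ℝ)/4) := by
    rw [hXdef, ← Real.rpow_natCast ((N:ℝ) ^ ((3:ℝ)/8)) 2, ← Real.rpow_mul (le_of_lt hNpos)]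
    norm_num
  have hdiv : (N:ℝ) ^ ((1:ℝ)/4) = (N:ℝ) / (N:ℝ) ^ ((3:ℝ)/4) := by
    rw [eq_div_iff (ne_of_gt (Real.rpow_pos_of_pos hNpos _)), ← Real.rpow_add hNpos,
      show (1:ℝ)/4 + 3/4 = 1 by norm_num, Real.rpow_one]
  calc ((N:ℝ) / K) * (∑ i ∈ s, (V i - Vb) ^ 2)
      ≤ ((N:ℝ) / K) * ((K:ℝ) * (2 / X) ^ 2) := by
        apply mul_le_mul_of_nonneg_left hsum (by positivity)
    _ = 4 * ((N:ℝ) / X ^ 2) := by field_simp; ring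
    _ = 4 * (N:ℝ) ^ ((1:ℝ)/4) := by rw [hX2, ← hdiv]
end
end

section
/- There exist an integer N₀ ≥ 1 and a constant C > 0 (depending only on p) such that the following holds. Let p ∈ (0,1], N ≥ N₀ and 1 ≤ K ≤ N be integers, and let A be an N×N real matrix all of whose entries belong to {0, 1/N} satisfying conditions (a), (b), (c) below. Let ρ be the spectral radius of A, assume p(1−1/(2N^{3/8})) ≤ ρ ≤ p(1+1/(2N^{3/8})), and let V ∈ ℝ^N satisfy A·V = ρ·V, V(i) > 0 for every i, and ‖V‖₂ = √N. Then for every integer n ≥ 2: ‖V^K‖₂·ρⁿ·e^{−C·N^{−3/16}} ≤ ‖I_K·Aⁿ·1_N‖₂ ≤ ‖V^K‖₂·ρⁿ·e^{C·N^{−3/16}}. -/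
open Finset Matrix

noncomputable section

/-- The diagonal projection matrix `I_K`. -/
def projK (N K : ℕ) : Matrix (Fin N) (Fin N) ℝ :=
  Matrix.of fun i j => if i = j ∧ (i : ℕ) < K then 1 else 0

/-- Euclidean norm on `ℝ^N`. -/
def euclNorm {N : ℕ} (v : Fin N → ℝ) : ℝ := Real.sqrt (∑ i, v i ^ 2)

lemma aux_mulVec_le {N : ℕ} {M : Matrix (Fin N) (Fin N) ℝ} (hM : ∀ i j, 0 ≤ M i j)
    {u v : Fin N → ℝ} (h : ∀ i, u i ≤ v i) (i : Fin N) :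
    M.mulVec u i ≤ M.mulVec v i := by
  simp only [Matrix.mulVec, dotProduct]
  exact Finset.sum_le_sum fun j _ => mul_le_mul_of_nonneg_left (h j) (hM i j)

lemma aux_pow_nonneg {N : ℕ} {M : Matrix (Fin N) (Fin N) ℝ} (hM : ∀ i j, 0 ≤ M i j)
    (n : ℕ) (i j : Fin N) : 0 ≤ (M ^ n) i j := by
  induction n generalizing i j with
  | zero => simp [Matrix.one_apply]; positivity
  | succ n ih =>
    rw [pow_succ, Matrix.mul_apply]
    exact Finset.sum_nonneg fun k _ => mul_nonneg (ih i k) (hM k j)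

lemma aux_pow_eigen {N : ℕ} {M : Matrix (Fin N) (Fin N) ℝ} {ρ : ℝ} {V : Fin N → ℝ}
    (h : M.mulVec V = ρ • V) (n : ℕ) : (M ^ n).mulVec V = ρ ^ n • V := by
  induction n with
  | zero => simp
  | succ n ih =>
    rw [pow_succ, ← Matrix.mulVec_mulVec, h, Matrix.mulVec_smul, ih, smul_smul, pow_succ]
    ring_nf

lemma aux_projK_mulVec {N K : ℕ} (u : Fin N → ℝ) (i : Fin N) :
    (projK N K).mulVec u i = if (i : ℕ) < K then u i else 0 := by
  simp only [projK, Matrix.mulVec, dotProduct, Matrix.of_apply]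
  rw [Finset.sum_eq_single i]
  · by_cases h : (i:ℕ) < K <;> simp [h]
  · intro b _ hb; simp [Ne.symm hb]
  · simp

lemma aux_exp_ratio {δ : ℝ} (h1 : 0 < δ) (h2 : δ ≤ 1/2) :
    (1+δ)/(1-δ) ≤ Real.exp (3*δ) := by
  have h1δ : (0:ℝ) < 1 - δ := by linarith
  have e1 : 1 + δ ≤ Real.exp δ := by have := Real.add_one_le_exp δ; linarith
  have e2 : 1 ≤ (1-δ) * Real.exp (2*δ) := by
    have hx := Real.add_one_le_exp (2*δ)
    have h0 : 0 ≤ δ*(1-2*δ) := mul_nonneg h1.le (by linarith)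
    nlinarith
  rw [div_le_iff₀ h1δ]
  have he : Real.exp (3*δ) = Real.exp δ * Real.exp (2*δ) := by
    rw [← Real.exp_add]; ring_nf
  rw [he]
  nlinarith [Real.exp_pos δ, Real.exp_pos (2*δ)]

set_option maxHeartbeats 1600000 in
/-- there are `N₀ ≥ 1` and `C > 0` depending only on `p` such that
for `N ≥ N₀`, `1 ≤ K ≤ N`, any `{0,1/N}`-valued matrix `A` satisfying the conditions of
`Ω_N^{K,2}`, with spectral radius `ρ ∈ [p(1−1/(2N^{3/8})), p(1+1/(2N^{3/8}))]` and
Perron eigenvector `V` (positive, `‖V‖₂ = √N`), one has, for every `n ≥ 2`,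
`‖V^K‖₂·ρⁿ·e^{−C·N^{−3/16}} ≤ ‖I_K·Aⁿ·1_N‖₂ ≤ ‖V^K‖₂·ρⁿ·e^{C·N^{−3/16}}`. -/
theorem stmt_9 (p : ℝ) (hp : 0 < p) (hp1 : p ≤ 1) :
    ∃ N₀ : ℕ, 1 ≤ N₀ ∧ ∃ C > 0, ∀ (N K : ℕ), N₀ ≤ N → 1 ≤ K → K ≤ N →
      ∀ A : Matrix (Fin N) (Fin N) ℝ,
        (∀ i j, A i j = 0 ∨ A i j = 1 / N) →
        (p / 2 < (∑ i, ∑ j, A i j) / N) →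
        (∀ i j, |(N : ℝ) * (A * A) i j - p ^ 2| < p ^ 2 / (2 * (N : ℝ) ^ ((3 : ℝ) / 8))) →
        (p / 2 < (∑ i ∈ Finset.univ.filter (fun i : Fin N => (i : ℕ) < K), ∑ j, A i j) / K) →
        ∀ (ρ : ℝ) (V : Fin N → ℝ),
          p * (1 - 1 / (2 * (N : ℝ) ^ ((3 : ℝ) / 8))) ≤ ρ →
          ρ ≤ p * (1 + 1 / (2 * (N : ℝ) ^ ((3 : ℝ) / 8))) →
          A.mulVec V = ρ • V →
          (∀ i, 0 < V i) →
          Real.sqrt (∑ i, V i ^ 2) = Real.sqrt N →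
          ∀ n : ℕ, 2 ≤ n →
            euclNorm (fun i : Fin N => if (i : ℕ) < K then V i else 0) * ρ ^ n
                * Real.exp (-(C * (N : ℝ) ^ (-(3 : ℝ) / 16)))
              ≤ euclNorm ((projK N K * A ^ n).mulVec fun _ => 1) ∧
            euclNorm ((projK N K * A ^ n).mulVec fun _ => 1)
              ≤ euclNorm (fun i : Fin N => if (i : ℕ) < K then V i else 0) * ρ ^ n
                * Real.exp (C * (N : ℝ) ^ (-(3 : ℝ) / 16)) := by
  refine ⟨1, le_refl 1, 9/2, by norm_num, ?_⟩
  intro N K hN hK1 hKN A hA ha hb hc ρ V hρlb hρub hAV hVpos hVnorm n hn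
  have hN1 : (1:ℝ) ≤ (N:ℝ) := by exact_mod_cast hN
  have hNpos : (0:ℝ) < N := by linarith
  -- δ and its basic bounds
  set δ : ℝ := 1 / (2 * (N : ℝ) ^ ((3 : ℝ) / 8)) with hδdef
  have h38 : (1:ℝ) ≤ (N:ℝ) ^ ((3:ℝ)/8) := Real.one_le_rpow hN1 (by norm_num)
  have hδpos : 0 < δ := by
    apply div_pos one_pos; positivity
  have hδhalf : δ ≤ 1/2 := by
    rw [hδdef, div_le_div_iff₀ (by positivity) (by norm_num)]
    linarith
  have h1δ : (0:ℝ) < 1 - δ := by linarith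
  have h1δ' : (0:ℝ) < 1 + δ := by linarith
  have hρpos : 0 < ρ := lt_of_lt_of_le (by nlinarith) hρlb
  -- the mean s of V
  set s : ℝ := (∑ j, V j) / N with hsdef
  have hVsum : 0 < ∑ j, V j := Finset.sum_pos (fun j _ => hVpos j) ⟨⟨0, by omega⟩, Finset.mem_univ _⟩
  have hs : 0 < s := div_pos hVsum hNpos
  -- entry bounds for A*A
  have hA2 : ∀ i j, p^2*(1-δ)/N ≤ (A*A) i j ∧ (A*A) i j ≤ p^2*(1+δ)/N := by
    intro i j
    have h := hb i j
    rw [abs_lt] at h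
    have hδeq : p ^ 2 / (2 * (N : ℝ) ^ ((3 : ℝ) / 8)) = p^2 * δ := by
      rw [hδdef]; ring
    rw [hδeq] at h
    constructor
    · rw [div_le_iff₀ hNpos]; nlinarith [h.1]
    · rw [le_div_iff₀ hNpos]; nlinarith [h.2]
  -- (A*A) V = ρ² V
  have hAAV : ∀ i, (∑ j, (A*A) i j * V j) = ρ^2 * V i := by
    intro i
    have : (A*A).mulVec V = ρ^2 • V := by
      rw [← Matrix.mulVec_mulVec, hAV, Matrix.mulVec_smul, hAV, smul_smul]
      norm_num [pow_two]
    have := congrFun this i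
    simpa [Matrix.mulVec, dotProduct] using this
  -- bounds on V
  set a : ℝ := (1-δ)/(1+δ)^2 with hadef
  set b : ℝ := (1+δ)/(1-δ)^2 with hbdef
  have hapos : 0 < a := div_pos h1δ (by positivity)
  have hbpos : 0 < b := div_pos h1δ' (by positivity)
  have hpδ : 0 < p * (1-δ) := mul_pos hp h1δ
  have hρsq_ub : ρ^2 ≤ p^2*(1+δ)^2 := by nlinarith [hρub, hρpos]
  have hρsq_lb : p^2*(1-δ)^2 ≤ ρ^2 := by nlinarith [hρlb, hpδ]
  have hVbound : ∀ i, a * s ≤ V i ∧ V i ≤ b * s := by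
    intro i
    have hsum_lb : p^2*(1-δ) * s ≤ ρ^2 * V i := by
      rw [← hAAV i]
      calc p^2*(1-δ) * s = ∑ j, (p^2*(1-δ)/N) * V j := by
            rw [← Finset.mul_sum, hsdef]; ring
        _ ≤ ∑ j, (A*A) i j * V j :=
            Finset.sum_le_sum fun j _ => mul_le_mul_of_nonneg_right (hA2 i j).1 (hVpos j).le
    have hsum_ub : ρ^2 * V i ≤ p^2*(1+δ) * s := by
      rw [← hAAV i]
      calc (∑ j, (A*A) i j * V j) ≤ ∑ j, (p^2*(1+δ)/N) * V j :=
            Finset.sum_le_sum fun j _ => mul_le_mul_of_nonneg_right (hA2 i j).2 (hVpos j).le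
        _ = p^2*(1+δ) * s := by rw [← Finset.mul_sum, hsdef]; ring
    have h2 : ρ^2 * V i ≤ p^2*(1+δ)^2 * V i := mul_le_mul_of_nonneg_right hρsq_ub (hVpos i).le
    have h3 : p^2*(1-δ)*s ≤ p^2*(1+δ)^2 * V i := le_trans hsum_lb h2
    have h4 : p^2*(1-δ)^2 * V i ≤ ρ^2 * V i := mul_le_mul_of_nonneg_right hρsq_lb (hVpos i).le
    have h5 : p^2*(1-δ)^2 * V i ≤ p^2*(1+δ)*s := le_trans h4 hsum_ub
    constructor
    · rw [hadef, div_mul_eq_mul_div, div_le_iff₀ (by positivity)]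
      nlinarith [h3, pow_pos hp 2]
    · rw [hbdef, div_mul_eq_mul_div, le_div_iff₀ (by positivity)]
      nlinarith [h5, pow_pos hp 2]
  -- s*a ≤ 1 ≤ s*b
  have hnorm2 : (∑ i, V i ^ 2) = N := by
    have h0 : (0:ℝ) ≤ ∑ i, V i ^ 2 := by positivity
    have := congrArg (fun x => x^2) hVnorm
    simpa [Real.sq_sqrt h0, Real.sq_sqrt (le_of_lt hNpos)] using this
  have hsb : 1 ≤ s * b := by
    have h1 : (∑ i, V i ^ 2) ≤ ∑ _i : Fin N, (b*s)^2 :=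
      Finset.sum_le_sum fun i _ => by
        have := (hVbound i).2
        nlinarith [(hVpos i).le]
    rw [hnorm2] at h1
    simp only [Finset.sum_const, Finset.card_univ, Fintype.card_fin, nsmul_eq_mul] at h1
    have h2 : 1 ≤ (b*s)^2 := by nlinarith [hNpos]
    nlinarith [mul_pos hs hbpos, h2]
  have hsa : s * a ≤ 1 := by
    have h1 : (∑ _i : Fin N, (a*s)^2) ≤ ∑ i, V i ^ 2 :=
      Finset.sum_le_sum fun i _ => by
        have := (hVbound i).1
        nlinarith [mul_pos hapos hs]
    rw [hnorm2] at h1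
    simp only [Finset.sum_const, Finset.card_univ, Fintype.card_fin, nsmul_eq_mul] at h1
    have h2 : (a*s)^2 ≤ 1 := by nlinarith [hNpos]
    nlinarith [mul_pos hs hapos, h2]
  -- uniform entry bounds on V
  have hV1 : ∀ i, a/b ≤ V i ∧ V i ≤ b/a := by
    intro i
    obtain ⟨hl, hu⟩ := hVbound i
    constructor
    · rw [div_le_iff₀ hbpos]
      calc a = a*1 := (mul_one a).symm
        _ ≤ a*(s*b) := mul_le_mul_of_nonneg_left hsb hapos.le
        _ = (a*s)*b := by ring
        _ ≤ V i * b := mul_le_mul_of_nonneg_right hl hbpos.le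
    · rw [le_div_iff₀ hapos]
      calc V i * a ≤ (b*s)*a := mul_le_mul_of_nonneg_right hu hapos.le
        _ = b*(s*a) := by ring
        _ ≤ b*1 := mul_le_mul_of_nonneg_left hsa hbpos.le
        _ = b := mul_one b
  -- entrywise comparison of 1 with V
  have hone_lb : ∀ i : Fin N, (a/b) * V i ≤ 1 := fun i => by
    have := (hV1 i).2
    have h := mul_le_mul_of_nonneg_left this (le_of_lt (div_pos hapos hbpos))
    calc (a/b) * V i ≤ (a/b) * (b/a) := h
      _ = 1 := by field_simp
  have hone_ub : ∀ i : Fin N, (1:ℝ) ≤ (b/a) * V i := fun i => by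
    have := (hV1 i).1
    have h := mul_le_mul_of_nonneg_left this (le_of_lt (div_pos hbpos hapos))
    calc (1:ℝ) = (b/a) * (a/b) := by field_simp
      _ ≤ (b/a) * V i := h
  -- A entries nonneg
  have hAnn : ∀ i j, 0 ≤ A i j := fun i j => by
    rcases hA i j with h | h <;> rw [h] <;> positivity
  -- the vector u = A^n 1
  set u : Fin N → ℝ := (A ^ n).mulVec (fun _ => 1) with hudef
  have hAnV : (A ^ n).mulVec V = ρ ^ n • V := aux_pow_eigen hAV n
  have hu_lb : ∀ i, (a/b) * (ρ^n * V i) ≤ u i := by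
    intro i
    have h1 : (A ^ n).mulVec ((a/b) • V) i ≤ u i :=
      aux_mulVec_le (aux_pow_nonneg hAnn n) hone_lb i
    rw [Matrix.mulVec_smul, hAnV] at h1
    simpa [mul_comm, mul_assoc, smul_smul] using h1
  have hu_ub : ∀ i, u i ≤ (b/a) * (ρ^n * V i) := by
    intro i
    have h1 : u i ≤ (A ^ n).mulVec ((b/a) • V) i :=
      aux_mulVec_le (aux_pow_nonneg hAnn n) hone_ub i
    rw [Matrix.mulVec_smul, hAnV] at h1
    simpa [mul_comm, mul_assoc, smul_smul] using h1
  -- the projected vector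
  have hw : ∀ i, ((projK N K * A ^ n).mulVec fun _ => 1) i = if (i:ℕ) < K then u i else 0 := by
    intro i
    rw [← Matrix.mulVec_mulVec, aux_projK_mulVec]
  -- norm squared computations
  set T : ℝ := ∑ i : Fin N, (if (i:ℕ) < K then V i else 0)^2 with hTdef
  have hT0 : 0 ≤ T := by positivity
  have hρn : 0 < ρ ^ n := pow_pos hρpos n
  have key_lb : (a/b) * ρ^n * Real.sqrt T ≤ euclNorm ((projK N K * A ^ n).mulVec fun _ => 1) := by
    rw [euclNorm]
    have hsum : ((a/b) * ρ^n)^2 * T ≤ ∑ i, (((projK N K * A ^ n).mulVec fun _ => 1) i)^2 := by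
      rw [hTdef, Finset.mul_sum]
      apply Finset.sum_le_sum
      intro i _
      rw [hw i]
      by_cases h : (i:ℕ) < K
      · simp only [h, if_true]
        have h1 := hu_lb i
        have h2 : 0 ≤ (a/b) * (ρ^n * V i) :=
          mul_nonneg (div_pos hapos hbpos).le (mul_nonneg hρn.le (hVpos i).le)
        calc ((a/b)*ρ^n)^2 * V i^2 = ((a/b)*(ρ^n*V i))^2 := by ring
          _ ≤ u i^2 := pow_le_pow_left₀ h2 h1 2
      · simp [h]
    calc (a/b) * ρ^n * Real.sqrt T = Real.sqrt (((a/b) * ρ^n)^2 * T) := by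
          rw [Real.sqrt_mul (sq_nonneg _), Real.sqrt_sq (mul_nonneg (div_pos hapos hbpos).le hρn.le)]
      _ ≤ _ := Real.sqrt_le_sqrt hsum
  have key_ub : euclNorm ((projK N K * A ^ n).mulVec fun _ => 1) ≤ (b/a) * ρ^n * Real.sqrt T := by
    rw [euclNorm]
    have hsum : (∑ i, (((projK N K * A ^ n).mulVec fun _ => 1) i)^2) ≤ ((b/a) * ρ^n)^2 * T := by
      rw [hTdef, Finset.mul_sum]
      apply Finset.sum_le_sum
      intro i _
      rw [hw i]
      by_cases h : (i:ℕ) < K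
      · simp only [h, if_true]
        have h1 := hu_ub i
        have h2 : 0 ≤ (a/b) * (ρ^n * V i) :=
          mul_nonneg (div_pos hapos hbpos).le (mul_nonneg hρn.le (hVpos i).le)
        have h0 : 0 ≤ u i := le_trans h2 (hu_lb i)
        calc u i^2 ≤ ((b/a)*(ρ^n*V i))^2 := pow_le_pow_left₀ h0 h1 2
          _ = ((b/a)*ρ^n)^2 * V i^2 := by ring
      · simp [h]
    calc Real.sqrt (∑ i, (((projK N K * A ^ n).mulVec fun _ => 1) i)^2)
        ≤ Real.sqrt (((b/a) * ρ^n)^2 * T) := Real.sqrt_le_sqrt hsum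
      _ = (b/a) * ρ^n * Real.sqrt T := by
          rw [Real.sqrt_mul (sq_nonneg _), Real.sqrt_sq (mul_nonneg (div_pos hbpos hapos).le hρn.le)]
  -- exponential bounds
  set η : ℝ := (N:ℝ) ^ (-(3:ℝ)/16) with hηdef
  have hη316 : (1:ℝ) ≤ (N:ℝ) ^ ((3:ℝ)/16) := Real.one_le_rpow hN1 (by norm_num)
  have hηeq : η = ((N:ℝ) ^ ((3:ℝ)/16))⁻¹ := by
    rw [hηdef, ← Real.rpow_neg (le_of_lt hNpos)]
    norm_num
  have hηpos : 0 < η := by rw [hηeq]; positivity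
  have hδη : 9 * δ ≤ (9/2) * η := by
    have h1 : (N:ℝ) ^ ((3:ℝ)/16) ≤ (N:ℝ) ^ ((3:ℝ)/8) :=
      Real.rpow_le_rpow_of_exponent_le hN1 (by norm_num)
    have h316 : (0:ℝ) < (N:ℝ) ^ ((3:ℝ)/16) := by positivity
    have heq : 9 * δ = (9/2) * ((N:ℝ) ^ ((3:ℝ)/8))⁻¹ := by rw [hδdef]; field_simp
    rw [heq, hηeq]
    exact mul_le_mul_of_nonneg_left (inv_anti₀ h316 h1) (by norm_num)
  have hba_exp : b/a ≤ Real.exp ((9/2) * η) := by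
    have e3 : (1+δ)/(1-δ) ≤ Real.exp (3*δ) := aux_exp_ratio hδpos hδhalf
    have hba : b/a = ((1+δ)/(1-δ))^3 := by
      rw [hadef, hbdef]; field_simp
    have e4 : b/a ≤ Real.exp (3*δ)^3 := by
      rw [hba]
      apply pow_le_pow_left₀ (by positivity) e3
    have e5 : Real.exp (3*δ)^3 = Real.exp (9*δ) := by
      rw [← Real.exp_nat_mul]; ring_nf
    calc b/a ≤ Real.exp (9*δ) := e4.trans_eq e5
      _ ≤ Real.exp ((9/2)*η) := Real.exp_le_exp.mpr hδη
  have hab_exp : Real.exp (-((9/2) * η)) ≤ a/b := by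
    rw [Real.exp_neg]
    have hba_pos : 0 < b/a := div_pos hbpos hapos
    have h1 : (Real.exp ((9/2)*η))⁻¹ ≤ (b/a)⁻¹ :=
      inv_anti₀ hba_pos hba_exp
    calc (Real.exp ((9/2)*η))⁻¹ ≤ (b/a)⁻¹ := h1
      _ = a/b := by rw [inv_div]
  -- conclude
  have hVK : euclNorm (fun i : Fin N => if (i:ℕ) < K then V i else 0) = Real.sqrt T := by
    rw [euclNorm, hTdef]
  have hsT : 0 ≤ Real.sqrt T := Real.sqrt_nonneg T
  constructor
  · rw [hVK]
    calc Real.sqrt T * ρ^n * Real.exp (-(9/2 * η))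
        ≤ Real.sqrt T * ρ^n * (a/b) := by
          apply mul_le_mul_of_nonneg_left hab_exp (mul_nonneg hsT hρn.le)
      _ = (a/b) * ρ^n * Real.sqrt T := by ring
      _ ≤ _ := key_lb
  · rw [hVK]
    calc euclNorm ((projK N K * A ^ n).mulVec fun _ => 1)
        ≤ (b/a) * ρ^n * Real.sqrt T := key_ub
      _ = Real.sqrt T * ρ^n * (b/a) := by ring
      _ ≤ Real.sqrt T * ρ^n * Real.exp (9/2 * η) := by
          apply mul_le_mul_of_nonneg_left hba_exp (mul_nonneg hsT hρn.le)
end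
end

section
/- Assume the supercritical exponential setting: b > 0, b < p ≤ 1, μ > 0, φ(s) = e^{−bs}, and set α = ρ − b. There exist constants C > c > 0, t₀ ≥ 1 and N₀ ≥ 1 (depending only on p, b, μ) such that for all integers N ≥ N₀ and 1 ≤ K ≤ N for which the matrix hypotheses below hold, and all t ≥ t₀: c·e^{αt} ≤ v_t ≤ C·e^{αt}, where v_t = μ·[ (√K/‖V^K‖₂)·t + Σ_{n≥1} (‖I_K·Aⁿ·1_N‖₂/‖V^K‖₂)·∫₀^t s·(t−s)^{n−1}·e^{−b(t−s)}/(n−1)! ds ]. -/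
open Finset Matrix

noncomputable section

/-- `‖V^K‖₂` where `V^K = I_K·V`. -/
def normVK {N : ℕ} (K : ℕ) (V : Fin N → ℝ) : ℝ :=
  euclNorm (fun i : Fin N => if (i : ℕ) < K then V i else 0)

/-- `v_t = μ·[(√K/‖V^K‖₂)·t
  + Σ_{n≥1} (‖I_K·Aⁿ·1_N‖₂/‖V^K‖₂)·∫₀^t s·(t−s)^{n−1}·e^{−b(t−s)}/(n−1)! ds]`,
the series being indexed here by `n+1`, `n ∈ ℕ`. -/
def vt {N : ℕ} (K : ℕ) (μ b : ℝ) (A : Matrix (Fin N) (Fin N) ℝ) (V : Fin N → ℝ)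
    (t : ℝ) : ℝ :=
  μ * ((Real.sqrt K / normVK K V) * t
    + ∑' n : ℕ,
        (euclNorm ((projK N K * A ^ (n + 1)).mulVec fun _ => (1 : ℝ)) / normVK K V)
          * ∫ s in (0 : ℝ)..t, s * ((t - s) ^ n * Real.exp (-(b * (t - s))) / (n.factorial : ℝ)))

/-!
Since `N (A²)ᵢⱼ ≈ p²` uniformly, the sums `ρ² Vᵢ = ∑ⱼ (A²)ᵢⱼ Vⱼ` are all comparable, so the
normalised Perron vector satisfies `1/2 ≤ V ≤ 2`. Comparing `1_N` with `V` coordinatewise and using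
`A ≥ 0` gives `‖I_K Aⁿ 1_N‖₂ ≍ ρⁿ ‖V^K‖₂`, so up to a factor 2 the series in `v_t` is
`∑ ρⁿ⁺¹ ∫₀ᵗ s φ^{*(n+1)}(t - s) ds = ρ ∫₀ᵗ s e^{(ρ-b)(t-s)} ds = ρ (e^{αt} - 1 - αt) / α²`
(an exponential series under the integral). For `N` large, `α = ρ - b ≥ (p - b)/2 > 0`, and both
bounds follow.
-/

open MeasureTheory Filter

namespace Matrix

variable {ι : Type*} [Fintype ι]

lemma monotone_mulVec_of_nonneg {R : Type*} [Semiring R] [PartialOrder R] [IsOrderedRing R]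
    {A : Matrix ι ι R} (hA : ∀ i j, 0 ≤ A i j) : Monotone (A *ᵥ ·) :=
  fun _ _ hxy i => dotProduct_le_dotProduct_of_nonneg_left hxy (hA i)

lemma pow_mulVec_mem_Icc_of_eigenvector [DecidableEq ι] {A : Matrix ι ι ℝ}
    (hA : ∀ i j, 0 ≤ A i j) {V u : ι → ℝ} {ρ c d : ℝ} (hV : A *ᵥ V = ρ • V)
    (hcu : c • V ≤ u) (hud : u ≤ d • V) (m : ℕ) :
    (c * ρ ^ m) • V ≤ A ^ m *ᵥ u ∧ A ^ m *ᵥ u ≤ (d * ρ ^ m) • V := by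
  induction m with
  | zero => simpa using ⟨hcu, hud⟩
  | succ m ih =>
    have hstep : ∀ e : ℝ, A *ᵥ ((e * ρ ^ m) • V) = (e * ρ ^ (m + 1)) • V := by
      intro e
      rw [mulVec_smul, hV, smul_smul, pow_succ]
      ring_nf
    rw [pow_succ' A, ← mulVec_mulVec, ← hstep, ← hstep]
    exact ⟨monotone_mulVec_of_nonneg hA ih.1, monotone_mulVec_of_nonneg hA ih.2⟩

/-- Each `θ V i = ∑ₖ B i k V k` lies between `L ∑ V` and `U ∑ V`. -/
lemma mul_le_mul_of_eigenvector_of_entry_bounds {B : Matrix ι ι ℝ} {V : ι → ℝ} {θ L U : ℝ}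
    (hV : B *ᵥ V = θ • V) (hVpos : ∀ i, 0 < V i) (hL : 0 < L)
    (hB : ∀ i j, L ≤ B i j ∧ B i j ≤ U) (i j : ι) : L * V i ≤ U * V j := by
  set S := ∑ k, V k
  have hS : 0 < S := Finset.sum_pos (fun k _ => hVpos k) ⟨i, Finset.mem_univ _⟩
  have hrow : ∀ i, L * S ≤ θ * V i ∧ θ * V i ≤ U * S := by
    intro i
    have hθ : θ * V i = ∑ k, B i k * V k := by
      rw [← smul_eq_mul, ← Pi.smul_apply, ← hV]
      rfl
    rw [hθ, Finset.mul_sum, Finset.mul_sum]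
    exact ⟨Finset.sum_le_sum fun k _ => mul_le_mul_of_nonneg_right (hB i k).1 (hVpos k).le,
      Finset.sum_le_sum fun k _ => mul_le_mul_of_nonneg_right (hB i k).2 (hVpos k).le⟩
  have hθ : 0 < θ := pos_of_mul_pos_left ((mul_pos hL hS).trans_le (hrow j).1) (hVpos j).le
  have hU : 0 ≤ U := hL.le.trans ((hB i i).1.trans (hB i i).2)
  refine le_of_mul_le_mul_left ?_ hθ
  calc θ * (L * V i) = L * (θ * V i) := by ring
    _ ≤ L * (U * S) := mul_le_mul_of_nonneg_left (hrow i).2 hL.le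
    _ = U * (L * S) := by ring
    _ ≤ U * (θ * V j) := mul_le_mul_of_nonneg_left (hrow j).1 hU
    _ = θ * (U * V j) := by ring

end Matrix

lemma inv_le_and_le_of_le_mul_of_sum_sq_eq_card {ι : Type*} [Fintype ι] {V : ι → ℝ} {r : ℝ}
    (hr : 0 < r) (hV : ∀ i, 0 ≤ V i) (hVr : ∀ i j, V i ≤ r * V j)
    (hsq : ∑ i, V i ^ 2 = Fintype.card ι) (i : ι) : r⁻¹ ≤ V i ∧ V i ≤ r := by
  have hcard : (0 : ℝ) < Fintype.card ι := by exact_mod_cast Fintype.card_pos_iff.2 ⟨i⟩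
  have hsq_le : ∀ i j, V i ^ 2 ≤ r ^ 2 * V j ^ 2 := fun i j => by
    rw [← mul_pow]; exact pow_le_pow_left₀ (hV i) (hVr i j) 2
  have hhi : V i ^ 2 ≤ r ^ 2 := by
    have h := Finset.sum_le_sum fun j (_ : j ∈ Finset.univ) => hsq_le i j
    rw [← Finset.mul_sum, hsq, Finset.sum_const, Finset.card_univ, nsmul_eq_mul] at h
    nlinarith
  have hlo : 1 ≤ (r * V i) ^ 2 := by
    have h := Finset.sum_le_sum fun j (_ : j ∈ Finset.univ) => hsq_le j i
    rw [hsq, Finset.sum_const, Finset.card_univ, nsmul_eq_mul] at h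
    nlinarith
  constructor
  · rw [inv_le_iff_one_le_mul₀' hr]
    exact (one_le_sq_iff_one_le_abs _).1 hlo |>.trans_eq (abs_of_nonneg (mul_nonneg hr.le (hV i)))
  · exact (pow_le_pow_iff_left₀ (hV i) hr.le two_ne_zero).1 hhi

section EuclNorm

variable {N : ℕ}

lemma euclNorm_mono {u v : Fin N → ℝ} (hu : 0 ≤ u) (huv : u ≤ v) : euclNorm u ≤ euclNorm v :=
  Real.sqrt_le_sqrt (Finset.sum_le_sum fun i _ => pow_le_pow_left₀ (hu i) (huv i) 2)

lemma euclNorm_smul {c : ℝ} (hc : 0 ≤ c) (v : Fin N → ℝ) :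
    euclNorm (c • v) = c * euclNorm v := by
  simp only [euclNorm, Pi.smul_apply, smul_eq_mul, mul_pow, ← Finset.mul_sum]
  rw [Real.sqrt_mul (sq_nonneg c), Real.sqrt_sq hc]

lemma projK_nonneg (K : ℕ) (i j : Fin N) : 0 ≤ projK N K i j := by
  simp only [projK, of_apply]
  split_ifs <;> norm_num

lemma projK_mulVec (K : ℕ) (w : Fin N → ℝ) :
    projK N K *ᵥ w = fun i : Fin N => if (i : ℕ) < K then w i else 0 := by
  ext i
  simp [projK, mulVec, dotProduct, ite_and]

lemma normVK_eq_euclNorm_projK_mulVec (K : ℕ) (V : Fin N → ℝ) :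
    normVK K V = euclNorm (projK N K *ᵥ V) := by
  rw [projK_mulVec, normVK]

lemma euclNorm_projK_mulVec_one {K : ℕ} (hKN : K ≤ N) :
    euclNorm (projK N K *ᵥ fun _ => 1) = Real.sqrt K := by
  simp [euclNorm, projK_mulVec, Fin.card_filter_val_lt, hKN]

lemma euclNorm_projK_pow_mulVec_one_mem_Icc {K : ℕ} {A : Matrix (Fin N) (Fin N) ℝ}
    (hA : ∀ i j, 0 ≤ A i j) {V : Fin N → ℝ} {ρ c d : ℝ} (hρ : 0 ≤ ρ) (hc : 0 ≤ c) (hd : 0 ≤ d)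
    (hV : 0 ≤ V) (hAV : A *ᵥ V = ρ • V) (hcV : c • V ≤ 1) (hdV : 1 ≤ d • V) (m : ℕ) :
    c * ρ ^ m * normVK K V ≤ euclNorm ((projK N K * A ^ m) *ᵥ fun _ => 1) ∧
      euclNorm ((projK N K * A ^ m) *ᵥ fun _ => 1) ≤ d * ρ ^ m * normVK K V := by
  obtain ⟨hlo, hhi⟩ := pow_mulVec_mem_Icc_of_eigenvector hA hAV hcV hdV m
  have hP := monotone_mulVec_of_nonneg (projK_nonneg (N := N) K)
  have hPV : 0 ≤ projK N K *ᵥ V := by simpa using hP hV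
  rw [normVK_eq_euclNorm_projK_mulVec, ← euclNorm_smul (by positivity),
    ← euclNorm_smul (by positivity), ← mulVec_mulVec, ← mulVec_smul, ← mulVec_smul]
  refine ⟨euclNorm_mono ?_ (hP hlo), euclNorm_mono ?_ (hP hhi)⟩
  · rw [mulVec_smul]; exact smul_nonneg (by positivity) hPV
  · have h := hP ((smul_nonneg (by positivity) hV).trans hlo)
    simp only [mulVec_zero] at h
    exact h

end EuclNorm

/-- `∫₀ᵗ s φ^{*(n+1)}(t - s) ds` for `φ(s) = e^{-bs}`. -/
def rampConv (b : ℝ) (n : ℕ) (t : ℝ) : ℝ :=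
  ∫ s in (0 : ℝ)..t, s * ((t - s) ^ n * Real.exp (-(b * (t - s))) / (n.factorial : ℝ))

lemma rampConv_nonneg (b : ℝ) (n : ℕ) {t : ℝ} (ht : 0 ≤ t) : 0 ≤ rampConv b n t :=
  intervalIntegral.integral_nonneg ht fun s hs => by
    have hts : 0 ≤ t - s := sub_nonneg.2 hs.2
    have hs0 := hs.1
    positivity

lemma hasSum_pow_mul_rampConv (ρ b t : ℝ) :
    HasSum (fun n => ρ ^ (n + 1) * rampConv b n t)
      (ρ * ∫ s in (0 : ℝ)..t, s * Real.exp ((ρ - b) * (t - s))) := by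
  have hexp (x : ℝ) : HasSum (fun n : ℕ => x ^ n / n.factorial) (Real.exp x) := by
    simpa [Real.exp_eq_exp_ℝ] using NormedSpace.expSeries_div_hasSum_exp x
  have hterm (n : ℕ) (s : ℝ) :
      ρ ^ (n + 1) * (s * ((t - s) ^ n * Real.exp (-(b * (t - s))) / n.factorial)) =
        ρ * s * Real.exp (-(b * (t - s))) * ((ρ * (t - s)) ^ n / n.factorial) := by
    rw [mul_pow, pow_succ]; ring
  simp only [rampConv, ← intervalIntegral.integral_const_mul, hterm]
  refine intervalIntegral.hasSum_integral_of_dominated_convergence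
    (fun n s => |ρ * s * Real.exp (-(b * (t - s)))| * (|ρ * (t - s)| ^ n / n.factorial))
    (fun n => (Continuous.aestronglyMeasurable (by fun_prop)))
    (fun n => ae_of_all _ fun s _ => ?_)
    (ae_of_all _ fun s _ => ((hexp _).mul_left _).summable) ?_
    (ae_of_all _ fun s _ => ?_)
  · simp [abs_mul]
  · simp only [((hexp _).mul_left _).tsum_eq]
    exact Continuous.intervalIntegrable (by fun_prop) _ _
  · have h : ρ * (s * Real.exp ((ρ - b) * (t - s))) =
        ρ * s * Real.exp (-(b * (t - s))) * Real.exp (ρ * (t - s)) := by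
      rw [mul_assoc (ρ * s), ← Real.exp_add]
      ring_nf
    rw [h]
    exact (hexp _).mul_left _

lemma integral_mul_exp_mul_sub {α : ℝ} (hα : α ≠ 0) (t : ℝ) :
    ∫ s in (0 : ℝ)..t, s * Real.exp (α * (t - s)) = (Real.exp (α * t) - 1 - α * t) / α ^ 2 := by
  have hderiv (s : ℝ) : HasDerivAt (fun s => -(s / α + 1 / α ^ 2) * Real.exp (α * (t - s)))
      (s * Real.exp (α * (t - s))) s := by
    have := (((hasDerivAt_id' s).div_const α).add_const (1 / α ^ 2)).fun_neg.fun_mul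
      (((hasDerivAt_id' s).const_sub t).const_mul α).exp
    refine this.congr_deriv ?_
    field_simp
    ring
  rw [intervalIntegral.integral_eq_sub_of_hasDerivAt (fun s _ => hderiv s)
    (Continuous.intervalIntegrable (by fun_prop) _ _)]
  simp only [sub_self, sub_zero, mul_zero, zero_div, zero_add, Real.exp_zero]
  field_simp
  ring

lemma integral_mul_exp_mul_sub_le {α t : ℝ} (hα : 0 < α) (ht : 0 ≤ t) :
    ∫ s in (0 : ℝ)..t, s * Real.exp (α * (t - s)) ≤ Real.exp (α * t) / α ^ 2 := by
  rw [integral_mul_exp_mul_sub hα.ne']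
  gcongr
  nlinarith

/-- Once `αt ≥ 3`, the correction `1 + αt` is at most half of `e^{αt} ≥ 1 + αt + (αt)²/2`. -/
lemma exp_div_le_integral_mul_exp_mul_sub {α t : ℝ} (hα : 0 < α) (hαt : 3 ≤ α * t) :
    Real.exp (α * t) / (2 * α ^ 2) ≤ ∫ s in (0 : ℝ)..t, s * Real.exp (α * (t - s)) := by
  rw [integral_mul_exp_mul_sub hα.ne', div_le_div_iff₀ (by positivity) (by positivity)]
  have := Real.quadratic_le_exp_of_nonneg (x := α * t) (by linarith)
  have : 2 + 2 * (α * t) ≤ Real.exp (α * t) := by nlinarith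
  nlinarith [mul_le_mul_of_nonneg_left this (sq_nonneg α)]

lemma tsum_mul_mem_Icc_of_hasSum {a r x : ℕ → ℝ} {S c d : ℝ}
    (hS : HasSum (fun n => a n * x n) S) (hx : ∀ n, 0 ≤ x n) (hca : ∀ n, 0 ≤ c * a n)
    (hr : ∀ n, c * a n ≤ r n ∧ r n ≤ d * a n) :
    c * S ≤ ∑' n, r n * x n ∧ ∑' n, r n * x n ≤ d * S := by
  have hlo : HasSum (fun n => c * a n * x n) (c * S) := by
    simpa only [mul_assoc] using hS.mul_left c
  have hhi : HasSum (fun n => d * a n * x n) (d * S) := by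
    simpa only [mul_assoc] using hS.mul_left d
  have hsum : Summable fun n => r n * x n :=
    Summable.of_nonneg_of_le (fun n => mul_nonneg ((hca n).trans (hr n).1) (hx n))
      (fun n => mul_le_mul_of_nonneg_right (hr n).2 (hx n)) hhi.summable
  exact ⟨hasSum_le (fun n => mul_le_mul_of_nonneg_right (hr n).1 (hx n)) hlo hsum.hasSum,
    hasSum_le (fun n => mul_le_mul_of_nonneg_right (hr n).2 (hx n)) hsum.hasSum hhi⟩

lemma vt_mem_Icc {N K : ℕ} (hK : 1 ≤ K) (hKN : K ≤ N) {μ b ρ t : ℝ} (hμ : 0 ≤ μ)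
    (hρ : 0 ≤ ρ) (ht : 0 ≤ t) {A : Matrix (Fin N) (Fin N) ℝ} (hA : ∀ i j, 0 ≤ A i j)
    {V : Fin N → ℝ} (hAV : A *ᵥ V = ρ • V) (hV : ∀ i, 2⁻¹ ≤ V i ∧ V i ≤ 2) :
    μ * (2⁻¹ * (ρ * ∫ s in (0 : ℝ)..t, s * Real.exp ((ρ - b) * (t - s)))) ≤ vt K μ b A V t ∧
      vt K μ b A V t ≤
        μ * (2 * t + 2 * (ρ * ∫ s in (0 : ℝ)..t, s * Real.exp ((ρ - b) * (t - s)))) := by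
  have hnorm := euclNorm_projK_pow_mulVec_one_mem_Icc (K := K) hA hρ (inv_nonneg.2 zero_le_two)
    zero_le_two (fun i => show 0 ≤ V i by linarith [(hV i).1]) hAV
    (fun i => by simp only [Pi.smul_apply, smul_eq_mul, Pi.one_apply]; linarith [(hV i).2])
    (fun i => by simp only [Pi.smul_apply, smul_eq_mul, Pi.one_apply]; linarith [(hV i).1])
  have hVK : 0 < normVK K V := by
    have h := (hnorm 0).2
    rw [pow_zero, mul_one, pow_zero, mul_one, euclNorm_projK_mulVec_one hKN] at h
    have : 0 < Real.sqrt K := Real.sqrt_pos.2 (by exact_mod_cast hK)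
    linarith
  have hr (m : ℕ) : 2⁻¹ * ρ ^ m ≤ euclNorm ((projK N K * A ^ m) *ᵥ fun _ => 1) / normVK K V ∧
      euclNorm ((projK N K * A ^ m) *ᵥ fun _ => 1) / normVK K V ≤ 2 * ρ ^ m := by
    rw [le_div_iff₀ hVK, div_le_iff₀ hVK]
    exact hnorm m
  have hr0 : Real.sqrt K / normVK K V ≤ 2 := by
    simpa [euclNorm_projK_mulVec_one hKN] using (hr 0).2
  obtain ⟨hlo, hhi⟩ := tsum_mul_mem_Icc_of_hasSum (hasSum_pow_mul_rampConv ρ b t)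
    (fun n => rampConv_nonneg b n ht) (fun n => by positivity) (fun n => hr (n + 1))
  have h0 : 0 ≤ Real.sqrt K / normVK K V * t := by positivity
  unfold vt
  exact ⟨mul_le_mul_of_nonneg_left (le_add_of_nonneg_of_le h0 hlo) hμ,
    mul_le_mul_of_nonneg_left (add_le_add (mul_le_mul_of_nonneg_right hr0 ht) hhi) hμ⟩

lemma perron_vector_mem_Icc {N : ℕ} {A : Matrix (Fin N) (Fin N) ℝ} {V : Fin N → ℝ}
    {p ρ D : ℝ} (hp : 0 < p) (hD : 3 ≤ D)
    (hA2 : ∀ i j, |(N : ℝ) * (A * A) i j - p ^ 2| < p ^ 2 / D) (hAV : A *ᵥ V = ρ • V)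
    (hVpos : ∀ i, 0 < V i) (hVnorm : ∑ i, V i ^ 2 = N) (i : Fin N) :
    2⁻¹ ≤ V i ∧ V i ≤ 2 := by
  have hN : (0 : ℝ) < N := by exact_mod_cast i.pos
  have hpD : p ^ 2 / D ≤ p ^ 2 / 3 := div_le_div_of_nonneg_left (by positivity) three_pos hD
  set L := (p ^ 2 - p ^ 2 / D) / N
  have hL : 0 < L := div_pos (by linarith [sq_pos_of_pos hp]) hN
  have hB (i j : Fin N) : L ≤ (A * A) i j ∧ (A * A) i j ≤ 2 * L := by
    have h := abs_lt.1 (hA2 i j)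
    rw [div_le_iff₀ hN, ← mul_div_assoc, le_div_iff₀ hN]
    constructor <;> linarith
  have hAAV : (A * A) *ᵥ V = (ρ * ρ) • V := by
    rw [← mulVec_mulVec, hAV, mulVec_smul, hAV, smul_smul]
  have hratio (i j : Fin N) : V i ≤ 2 * V j := by
    have h := mul_le_mul_of_eigenvector_of_entry_bounds hAAV hVpos hL hB i j
    nlinarith
  exact inv_le_and_le_of_le_mul_of_sum_sq_eq_card two_pos (fun i => (hVpos i).le) hratio
    (by simpa using hVnorm) i

lemma rho_bounds {p b ρ D : ℝ} (hb : 0 ≤ b) (hbp : b < p) (hp1 : p ≤ 1)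
    (hD : max 3 (2 / (p - b)) ≤ D) (hlo : p * (1 - 1 / D) ≤ ρ) (hhi : ρ ≤ p * (1 + 1 / D)) :
    p / 2 ≤ ρ ∧ ρ ≤ 4 / 3 ∧ (p - b) / 2 ≤ ρ - b := by
  have hD3 : 3 ≤ D := (le_max_left _ _).trans hD
  have hDpb : 1 / D ≤ (p - b) / 2 := by
    have h := (le_max_right _ _).trans hD
    rw [div_le_iff₀ (by linarith)] at h
    rw [div_le_iff₀ (by linarith)]
    linarith
  have h3 : p * (1 / D) ≤ p * (1 / 3) :=
    mul_le_mul_of_nonneg_left (one_div_le_one_div_of_le three_pos hD3) (hb.trans hbp.le)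
  have hpD : p * (1 / D) ≤ 1 / D := mul_le_of_le_one_left (by positivity) hp1
  rw [mul_sub, mul_one] at hlo
  rw [mul_add, mul_one] at hhi
  exact ⟨by linarith, by linarith, by linarith⟩

lemma rho_mul_integral_mul_exp_bounds {p ρ b a t : ℝ} (hb : 0 ≤ b) (ha : 0 < a) (hαa : a ≤ ρ - b)
    (hρp : p / 2 ≤ ρ) (hρ : ρ ≤ 4 / 3) (hat : 3 ≤ a * t) :
    p / 8 * Real.exp ((ρ - b) * t) ≤ ρ * ∫ s in (0 : ℝ)..t, s * Real.exp ((ρ - b) * (t - s)) ∧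
      2 * t + 2 * (ρ * ∫ s in (0 : ℝ)..t, s * Real.exp ((ρ - b) * (t - s))) ≤
        (2 / a + 3 / a ^ 2) * Real.exp ((ρ - b) * t) := by
  set E := Real.exp ((ρ - b) * t)
  set J := ∫ s in (0 : ℝ)..t, s * Real.exp ((ρ - b) * (t - s))
  have ht : 0 ≤ t := by nlinarith
  have hJlo : E / 4 ≤ J := by
    refine le_trans ?_ (exp_div_le_integral_mul_exp_mul_sub (by linarith) (by nlinarith))
    exact div_le_div_of_nonneg_left (by positivity) (by nlinarith) (by nlinarith)
  have hJhi : J ≤ E / a ^ 2 :=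
    (integral_mul_exp_mul_sub_le (by linarith) ht).trans
      (div_le_div_of_nonneg_left (by positivity) (by positivity) (pow_le_pow_left₀ ha.le hαa 2))
  have htE : t ≤ E / a := by
    rw [le_div_iff₀' ha]
    nlinarith [Real.add_one_le_exp ((ρ - b) * t)]
  have hρJ : ρ * J ≤ 4 / 3 * (E / a ^ 2) :=
    mul_le_mul hρ hJhi (hJlo.trans' (by positivity)) (by norm_num)
  have : 0 ≤ E / a ^ 2 := by positivity
  refine ⟨?_, ?_⟩
  · calc p / 8 * E = p / 2 * (E / 4) := by ring
      _ ≤ ρ * J := mul_le_mul hρp hJlo (by positivity) (by linarith)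
  · calc 2 * t + 2 * (ρ * J) ≤ 2 * (E / a) + 3 * (E / a ^ 2) := by linarith
      _ = (2 / a + 3 / a ^ 2) * E := by ring

/-- in the supercritical exponential setting (`0 < b < p ≤ 1`, `μ > 0`,
`φ(s) = e^{−bs}`, `α = ρ − b`), there are `C > c > 0`, `t₀ ≥ 1` and `N₀ ≥ 1` such that for
`N ≥ N₀`, `1 ≤ K ≤ N`, matrices satisfying the conditions of `Ω_N^{K,2}`, and all `t ≥ t₀`:
`c·e^{αt} ≤ v_t ≤ C·e^{αt}`. -/
theorem stmt_11 (p b μ : ℝ) (hb : 0 < b) (hbp : b < p) (hp1 : p ≤ 1) (hμ : 0 < μ) :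
    ∃ C c : ℝ, 0 < c ∧ c < C ∧ ∃ t₀ : ℝ, 1 ≤ t₀ ∧
      ∃ N₀ : ℕ, 1 ≤ N₀ ∧ ∀ (N K : ℕ), N₀ ≤ N → 1 ≤ K → K ≤ N →
      ∀ A : Matrix (Fin N) (Fin N) ℝ,
        (∀ i j, A i j = 0 ∨ A i j = 1 / N) →
        (p / 2 < (∑ i, ∑ j, A i j) / N) →
        (∀ i j, |(N : ℝ) * (A * A) i j - p ^ 2| < p ^ 2 / (2 * (N : ℝ) ^ ((3 : ℝ) / 8))) →
        (p / 2 < (∑ i ∈ Finset.univ.filter (fun i : Fin N => (i : ℕ) < K), ∑ j, A i j) / K) →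
        ∀ (ρ : ℝ) (V : Fin N → ℝ),
          p * (1 - 1 / (2 * (N : ℝ) ^ ((3 : ℝ) / 8))) ≤ ρ →
          ρ ≤ p * (1 + 1 / (2 * (N : ℝ) ^ ((3 : ℝ) / 8))) →
          A.mulVec V = ρ • V →
          (∀ i, 0 < V i) →
          Real.sqrt (∑ i, V i ^ 2) = Real.sqrt N →
          ∀ t : ℝ, t₀ ≤ t →
            c * Real.exp ((ρ - b) * t) ≤ vt K μ b A V t ∧
            vt K μ b A V t ≤ C * Real.exp ((ρ - b) * t) := by
  have hp : 0 < p := hb.trans hbp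
  set a := (p - b) / 2
  have ha : 0 < a := by simp only [a]; linarith
  obtain ⟨N₀, hN₀⟩ := eventually_atTop.1 <|
    (((tendsto_rpow_atTop (by norm_num : (0 : ℝ) < 3 / 8)).comp
      tendsto_natCast_atTop_atTop).const_mul_atTop two_pos).eventually_ge_atTop
        (max 3 (2 / (p - b)))
  refine ⟨μ * (2 / a + 3 / a ^ 2), μ * p / 16, by positivity, ?_, max 1 (3 / a), le_max_left _ _,
    max N₀ 1, le_max_right _ _, ?_⟩
  · have : 4 ≤ 2 / a := by rw [le_div_iff₀ ha]; simp only [a]; linarith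
    have : 0 < 3 / a ^ 2 := by positivity
    nlinarith
  intro N K hN hK hKN A hA01 _ hA2 _ ρ V hρlo hρhi hAV hVpos hVnorm t ht
  have hD := hN₀ N (le_of_max_le_left hN)
  obtain ⟨hρp, hρ, hαa⟩ := rho_bounds hb.le hbp hp1 hD hρlo hρhi
  have hA (i j : Fin N) : 0 ≤ A i j := by rcases hA01 i j with h | h <;> simp [h]
  have hV := perron_vector_mem_Icc hp ((le_max_left _ _).trans hD) hA2 hAV hVpos
    ((Real.sqrt_inj (by positivity) (by positivity)).1 hVnorm)
  have hat : 3 ≤ a * t := (div_le_iff₀' ha).1 ((le_max_right _ _).trans ht)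
  obtain ⟨hlo, hhi⟩ := vt_mem_Icc (b := b) hK hKN hμ.le (by linarith)
    (zero_le_one.trans ((le_max_left _ _).trans ht)) hA hAV hV
  obtain ⟨hJlo, hJhi⟩ := rho_mul_integral_mul_exp_bounds hb.le ha hαa hρp hρ hat
  constructor
  · calc μ * p / 16 * Real.exp ((ρ - b) * t)
        = μ * (2⁻¹ * (p / 8 * Real.exp ((ρ - b) * t))) := by ring
      _ ≤ vt K μ b A V t := le_trans (by gcongr) hlo
  · calc vt K μ b A V t ≤ _ := hhi
      _ ≤ μ * ((2 / a + 3 / a ^ 2) * Real.exp ((ρ - b) * t)) := by gcongr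
      _ = μ * (2 / a + 3 / a ^ 2) * Real.exp ((ρ - b) * t) := by ring
end
end

section
/- Let φ : [0,∞) → [0,∞) be measurable with Λ := ∫₀^∞ φ(s) ds ∈ (0,∞), and suppose that for some q ≥ 1 one has ∫₀^∞ s^q·φ(s) ds < ∞. Then there exists a constant C > 0 (depending only on φ and q) such that for every integer n ≥ 1 and every real r ≥ 1: ∫_r^∞ √s·φ^{*n}(s) ds ≤ C·Λⁿ·n^q·r^{1/2−q}. -/
open MeasureTheory

noncomputable section

/-- Convolution powers of `φ`: `φ^{*1} = φ`, `φ^{*(n+1)}(t) = ∫₀^t φ^{*n}(t−s)·φ(s) ds`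
(`convPow φ 0` is junk, never used). -/
def convPow (φ : ℝ → ℝ) : ℕ → ℝ → ℝ
  | 0 => fun _ => 0
  | 1 => φ
  | n + 2 => fun t => ∫ s in (0 : ℝ)..t, convPow φ (n + 1) (t - s) * φ s

/-! Bound `|φ^{*n}|` pointwise by the `ℝ≥0∞`-valued convolution power of `φ`, whose measure
is the `n`-fold convolution `ν^{*n}` of `ν = φ(s) ds`. Convexity of `t ↦ t^q` with weights
`1/(n+1)` and `n/(n+1)` gives the moment bound `∫ x^q dν^{*(n+1)} ≤ (n+1)^q ν(ℝ)^n ∫ x^q dν`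
(Minkowski's inequality for a sum of i.i.d. variables), and on `(r, ∞)` Markov's bound
`√s ≤ r^{1/2-q} s^q` turns it into the tail estimate. -/

open Set
open scoped ENNReal

/-- Convexity of `t ↦ t ^ q` with weights `1 / (N + 1)` and `N / (N + 1)`. -/
theorem ENNReal.add_rpow_le_weighted {q : ℝ} (hq : 1 ≤ q) {N : ℝ≥0∞} (hN₀ : N ≠ 0) (hN : N ≠ ∞)
    (a b : ℝ≥0∞) : (a + b) ^ q ≤ (N + 1) ^ (q - 1) * (a ^ q + N ^ (1 - q) * b ^ q) := by
  have hq₀ : 0 ≤ q := zero_le_one.trans hq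
  have hM₀ : N + 1 ≠ 0 := by simp
  have hM : N + 1 ≠ ∞ := by simp [hN]
  have hw : (N + 1)⁻¹ + (N + 1)⁻¹ * N = 1 := by
    rw [← mul_one_add, add_comm 1 N, ENNReal.inv_mul_cancel hM₀ hM]
  have key := ENNReal.rpow_arith_mean_le_arith_mean2_rpow _ _ ((N + 1) * a)
    ((N + 1) * N⁻¹ * b) hw hq
  have hpow : (N + 1)⁻¹ * (N + 1) ^ q = (N + 1) ^ (q - 1) := by
    rw [ENNReal.rpow_sub _ _ hM₀ hM, ENNReal.rpow_one, ENNReal.div_eq_inv_mul]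
  have hpowN : N * N⁻¹ ^ q = N ^ (1 - q) := by
    rw [ENNReal.inv_rpow, ENNReal.rpow_sub _ _ hN₀ hN, ENNReal.rpow_one, div_eq_mul_inv]
  calc (a + b) ^ q = ((N + 1)⁻¹ * ((N + 1) * a) + (N + 1)⁻¹ * N * ((N + 1) * N⁻¹ * b)) ^ q := by
        have hb : (N + 1)⁻¹ * N * ((N + 1) * N⁻¹ * b) = ((N + 1)⁻¹ * (N + 1)) * (N * N⁻¹) * b := by
          ring
        rw [ENNReal.inv_mul_cancel_left hM₀ hM, hb, ENNReal.inv_mul_cancel hM₀ hM,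
          ENNReal.mul_inv_cancel hN₀ hN, one_mul, one_mul]
    _ ≤ _ := key
    _ = (N + 1) ^ (q - 1) * (a ^ q + N ^ (1 - q) * b ^ q) := by
        simp only [ENNReal.mul_rpow_of_nonneg _ _ hq₀]
        rw [← hpow, ← hpowN]
        ring

namespace MeasureTheory.Measure

variable {M : Type*} [AddMonoid M] [MeasurableSpace M] [MeasurableAdd₂ M]

theorem conv_apply_univ (μ ν : Measure M) [SFinite ν] : (μ ∗ ν) univ = μ univ * ν univ := by
  rw [conv, map_apply (by fun_prop) MeasurableSet.univ, preimage_univ, ← univ_prod_univ, prod_prod]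

def convPow (μ : Measure M) : ℕ → Measure M
  | 0 => dirac 0
  | n + 1 => μ ∗ convPow μ n

instance {μ : Measure M} [SFinite μ] (n : ℕ) : SFinite (μ.convPow n) := by
  induction n with
  | zero => rw [convPow]; infer_instance
  | succ n _ => rw [convPow, conv]; infer_instance

theorem convPow_apply_univ (μ : Measure M) [SFinite μ] (n : ℕ) :
    μ.convPow n univ = μ univ ^ n := by
  induction n with
  | zero => simp [convPow]
  | succ n ih => rw [convPow, conv_apply_univ, ih, pow_succ']

theorem lintegral_ofReal_rpow_conv_le {q : ℝ} (hq : 1 ≤ q) {N : ℝ≥0∞} (hN₀ : N ≠ 0) (hN : N ≠ ∞)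
    (μ ν : Measure ℝ) [SFinite ν] :
    ∫⁻ x, ENNReal.ofReal x ^ q ∂(μ ∗ ν) ≤ (N + 1) ^ (q - 1) *
      ((∫⁻ x, ENNReal.ofReal x ^ q ∂μ) * ν univ +
        N ^ (1 - q) * (μ univ * ∫⁻ y, ENNReal.ofReal y ^ q ∂ν)) := by
  have hq₀ : 0 ≤ q := zero_le_one.trans hq
  rw [lintegral_conv (by fun_prop)]
  calc ∫⁻ x, ∫⁻ y, ENNReal.ofReal (x + y) ^ q ∂ν ∂μ
      ≤ ∫⁻ x, ∫⁻ y, (N + 1) ^ (q - 1) *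
          (ENNReal.ofReal x ^ q + N ^ (1 - q) * ENNReal.ofReal y ^ q) ∂ν ∂μ :=
        lintegral_mono fun x => lintegral_mono fun y =>
          (ENNReal.rpow_le_rpow ENNReal.ofReal_add_le hq₀).trans
            (ENNReal.add_rpow_le_weighted hq hN₀ hN _ _)
    _ = _ := by
        have hm : Measurable fun x : ℝ => ENNReal.ofReal x ^ q := by fun_prop
        have inner : ∀ x : ℝ, ∫⁻ y, (N + 1) ^ (q - 1) *
            (ENNReal.ofReal x ^ q + N ^ (1 - q) * ENNReal.ofReal y ^ q) ∂ν =
            (N + 1) ^ (q - 1) * (ENNReal.ofReal x ^ q * ν univ +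
              N ^ (1 - q) * ∫⁻ y, ENNReal.ofReal y ^ q ∂ν) := fun x => by
          rw [lintegral_const_mul _ ((hm.const_mul _).const_add _),
            lintegral_add_left measurable_const, lintegral_const, lintegral_const_mul _ hm]
        simp_rw [inner]
        rw [lintegral_const_mul _ (((hm.mul_const _).add_const _)),
          lintegral_add_right _ measurable_const, lintegral_mul_const _ hm, lintegral_const]
        ring

theorem lintegral_ofReal_rpow_convPow_le {q : ℝ} (hq : 1 ≤ q) (μ : Measure ℝ) [SFinite μ]
    (n : ℕ) : ∫⁻ x, ENNReal.ofReal x ^ q ∂(μ.convPow (n + 1)) ≤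
      ((n : ℝ≥0∞) + 1) ^ q * μ univ ^ n * ∫⁻ x, ENNReal.ofReal x ^ q ∂μ := by
  induction n with
  | zero => simp [convPow]
  | succ n ih =>
    set N : ℝ≥0∞ := (n : ℝ≥0∞) + 1
    have hN₀ : N ≠ 0 := by simp [N]
    have hN : N ≠ ∞ := by simp [N]
    have hNN : N ^ (1 - q) * N ^ q = N := by
      rw [← ENNReal.rpow_add _ _ hN₀ hN, sub_add_cancel, ENNReal.rpow_one]
    have hN1 : (N + 1) ^ (q - 1) * (N + 1) = (N + 1) ^ q := by
      rw [ENNReal.rpow_sub _ _ (by simp) (by simp [hN]), ENNReal.rpow_one,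
        ENNReal.div_mul_cancel (by simp) (by simp [hN])]
    calc ∫⁻ x, ENNReal.ofReal x ^ q ∂(μ.convPow (n + 1 + 1))
        ≤ (N + 1) ^ (q - 1) * ((∫⁻ x, ENNReal.ofReal x ^ q ∂μ) * μ univ ^ (n + 1) +
            N ^ (1 - q) * (μ univ * ∫⁻ y, ENNReal.ofReal y ^ q ∂(μ.convPow (n + 1)))) := by
          rw [convPow, ← convPow_apply_univ]
          exact lintegral_ofReal_rpow_conv_le hq hN₀ hN _ _
      _ ≤ (N + 1) ^ (q - 1) * ((∫⁻ x, ENNReal.ofReal x ^ q ∂μ) * μ univ ^ (n + 1) +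
            N ^ (1 - q) * (μ univ * (N ^ q * μ univ ^ n * ∫⁻ x, ENNReal.ofReal x ^ q ∂μ))) := by
          gcongr
      _ = (N + 1) ^ (q - 1) * (1 + N ^ (1 - q) * N ^ q) * μ univ ^ (n + 1) *
            ∫⁻ x, ENNReal.ofReal x ^ q ∂μ := by
          ring
      _ = _ := by rw [hNN, add_comm 1 N, hN1]; push_cast; rfl

end MeasureTheory.Measure

theorem enorm_intervalIntegral_le_lintegral_enorm {E : Type*} [NormedAddCommGroup E]
    [NormedSpace ℝ E] (f : ℝ → E) (a b : ℝ) : ‖∫ x in a..b, f x‖ₑ ≤ ∫⁻ x, ‖f x‖ₑ := by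
  rcases le_total a b with hab | hab
  · rw [intervalIntegral.integral_of_le hab]
    exact (enorm_integral_le_lintegral_enorm _).trans (setLIntegral_le_lintegral _ _)
  · rw [intervalIntegral.integral_of_ge hab, enorm_neg]
    exact (enorm_integral_le_lintegral_enorm _).trans (setLIntegral_le_lintegral _ _)

theorem setLIntegral_Ioi_ofReal_rpow_le (μ : Measure ℝ) {p q r : ℝ} (hr : 0 < r) (hpq : p ≤ q) :
    ∫⁻ x in Ioi r, ENNReal.ofReal x ^ p ∂μ ≤
      ENNReal.ofReal (r ^ (p - q)) * ∫⁻ x, ENNReal.ofReal x ^ q ∂μ := by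
  calc ∫⁻ x in Ioi r, ENNReal.ofReal x ^ p ∂μ
      ≤ ∫⁻ x in Ioi r, ENNReal.ofReal (r ^ (p - q)) * ENNReal.ofReal x ^ q ∂μ := by
        refine setLIntegral_mono' measurableSet_Ioi fun x (hx : r < x) => ?_
        have hx₀ : 0 < x := hr.trans hx
        rw [ENNReal.ofReal_rpow_of_pos hx₀, ENNReal.ofReal_rpow_of_pos hx₀,
          ← ENNReal.ofReal_mul (by positivity)]
        refine ENNReal.ofReal_le_ofReal ?_
        calc x ^ p = x ^ (p - q) * x ^ q := by rw [← Real.rpow_add hx₀, sub_add_cancel]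
          _ ≤ r ^ (p - q) * x ^ q := mul_le_mul_of_nonneg_right
            (Real.rpow_le_rpow_of_nonpos hr hx.le (sub_nonpos.2 hpq)) (by positivity)
    _ = ENNReal.ofReal (r ^ (p - q)) * ∫⁻ x in Ioi r, ENNReal.ofReal x ^ q ∂μ :=
        lintegral_const_mul' _ _ ENNReal.ofReal_ne_top
    _ ≤ ENNReal.ofReal (r ^ (p - q)) * ∫⁻ x, ENNReal.ofReal x ^ q ∂μ :=
        by gcongr; exact Measure.restrict_le_self

theorem lintegral_eq_setLIntegral_Ioi_zero {f : ℝ → ℝ≥0∞} (hf : ∀ x < 0, f x = 0) :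
    ∫⁻ x, f x = ∫⁻ x in Ioi 0, f x := by
  rw [setLIntegral_congr Ioi_ae_eq_Ici, setLIntegral_eq_of_support_subset]
  exact fun x hx => not_lt.1 fun hx₀ => hx (hf x hx₀)

/-- Indexed like `convPow`: the `n`-fold convolution for `n ≥ 1`, junk at `0`. -/
def lconvPow (f : ℝ → ℝ≥0∞) : ℕ → ℝ → ℝ≥0∞
  | 0 => 0
  | 1 => f
  | n + 2 => f ⋆ₗ lconvPow f (n + 1)

theorem measurable_lconvPow {f : ℝ → ℝ≥0∞} (hf : Measurable f) : ∀ n, Measurable (lconvPow f n)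
  | 0 => measurable_const
  | 1 => hf
  | n + 2 => measurable_lconvolution _ hf (measurable_lconvPow hf (n + 1))

theorem withDensity_lconvPow {f : ℝ → ℝ≥0∞} (hf : Measurable f) :
    ∀ n : ℕ, volume.withDensity (lconvPow f (n + 1)) = (volume.withDensity f).convPow (n + 1)
  | 0 => by simp [lconvPow, Measure.convPow]
  | n + 1 => by
    rw [lconvPow, ← conv_withDensity_eq_lconvolution hf (measurable_lconvPow hf _),
      withDensity_lconvPow hf n]
    rfl

theorem enorm_convPow_le (φ : ℝ → ℝ) : ∀ n t, ‖convPow φ n t‖ₑ ≤ lconvPow (‖φ ·‖ₑ) n t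
  | 0, t => by simp [convPow]
  | 1, t => le_rfl
  | n + 2, t => calc
      ‖∫ s in (0 : ℝ)..t, convPow φ (n + 1) (t - s) * φ s‖ₑ
          ≤ ∫⁻ s, ‖convPow φ (n + 1) (t - s) * φ s‖ₑ :=
        enorm_intervalIntegral_le_lintegral_enorm _ _ _
      _ ≤ ∫⁻ s, ‖φ s‖ₑ * lconvPow (‖φ ·‖ₑ) (n + 1) (-s + t) := lintegral_mono fun s => by
        rw [enorm_mul, mul_comm, neg_add_eq_sub]
        gcongr
        exact enorm_convPow_le φ (n + 1) (t - s)

theorem withDensity_enorm_apply_univ {φ : ℝ → ℝ} (hnonneg : ∀ s, 0 ≤ φ s)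
    (hzero : ∀ s < (0 : ℝ), φ s = 0) (hint : IntegrableOn φ (Ioi 0)) :
    volume.withDensity (‖φ ·‖ₑ) univ = ENNReal.ofReal (∫ s in Ioi 0, φ s) := by
  rw [withDensity_apply _ MeasurableSet.univ, Measure.restrict_univ,
    lintegral_eq_setLIntegral_Ioi_zero fun x hx => by simp [hzero x hx],
    ofReal_integral_eq_lintegral_ofReal hint (ae_of_all _ hnonneg)]
  exact setLIntegral_congr_fun measurableSet_Ioi fun x _ => Real.enorm_eq_ofReal (hnonneg x)

theorem lintegral_ofReal_rpow_withDensity_enorm_lt_top {φ : ℝ → ℝ} {q : ℝ} (hmeas : Measurable φ)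
    (hzero : ∀ s < (0 : ℝ), φ s = 0) (hmom : IntegrableOn (fun s => s ^ q * φ s) (Ioi 0)) :
    ∫⁻ x, ENNReal.ofReal x ^ q ∂(volume.withDensity (‖φ ·‖ₑ)) < ∞ := by
  rw [lintegral_withDensity_eq_lintegral_mul _ hmeas.enorm (by fun_prop),
    lintegral_eq_setLIntegral_Ioi_zero fun x hx => by simp [hzero x hx]]
  refine lt_of_eq_of_lt (setLIntegral_congr_fun measurableSet_Ioi fun x (hx : 0 < x) => ?_)
    hmom.hasFiniteIntegral
  rw [Pi.mul_apply, enorm_mul, Real.enorm_eq_ofReal (Real.rpow_nonneg hx.le q),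
    ENNReal.ofReal_rpow_of_pos hx, mul_comm]

theorem setLIntegral_Ioi_enorm_sqrt_mul_convPow_le {φ : ℝ → ℝ} {q r : ℝ} (hq : 1 ≤ q)
    (hmeas : Measurable φ) (hr : 0 < r) (n : ℕ) :
    ∫⁻ s in Ioi r, ‖√s * convPow φ (n + 1) s‖ₑ ≤ ENNReal.ofReal (r ^ ((1 : ℝ) / 2 - q)) *
      (((n : ℝ≥0∞) + 1) ^ q * volume.withDensity (‖φ ·‖ₑ) univ ^ n *
        ∫⁻ x, ENNReal.ofReal x ^ q ∂(volume.withDensity (‖φ ·‖ₑ))) := by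
  have hφ : Measurable (‖φ ·‖ₑ) := hmeas.enorm
  calc ∫⁻ s in Ioi r, ‖√s * convPow φ (n + 1) s‖ₑ
      ≤ ∫⁻ s in Ioi r, lconvPow (‖φ ·‖ₑ) (n + 1) s * ENNReal.ofReal s ^ ((1 : ℝ) / 2) := by
        refine setLIntegral_mono' measurableSet_Ioi fun s (hs : r < s) => ?_
        rw [enorm_mul, Real.enorm_eq_ofReal (Real.sqrt_nonneg s), Real.sqrt_eq_rpow,
          ← ENNReal.ofReal_rpow_of_pos (hr.trans hs), mul_comm]
        gcongr
        exact enorm_convPow_le φ (n + 1) s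
    _ = ∫⁻ s in Ioi r, ENNReal.ofReal s ^ ((1 : ℝ) / 2)
          ∂((volume.withDensity (‖φ ·‖ₑ)).convPow (n + 1)) := by
        rw [← withDensity_lconvPow hφ, setLIntegral_withDensity_eq_setLIntegral_mul _
          (measurable_lconvPow hφ _) (by fun_prop) measurableSet_Ioi]
        rfl
    _ ≤ _ := (setLIntegral_Ioi_ofReal_rpow_le _ hr (by linarith : (1 : ℝ) / 2 ≤ q)).trans
        (by gcongr; exact Measure.lintegral_ofReal_rpow_convPow_le hq _ n)

/-- if `Λ = ∫₀^∞ φ ∈ (0,∞)` and `∫₀^∞ s^q φ(s) ds < ∞` for some `q ≥ 1`,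
then for some `C > 0`, for all `n ≥ 1` and `r ≥ 1`,
`∫_r^∞ √s·φ^{*n}(s) ds ≤ C·Λⁿ·n^q·r^{1/2−q}`. -/
theorem stmt_12 (φ : ℝ → ℝ) (q : ℝ) (hq : 1 ≤ q)
    (hmeas : Measurable φ) (hnonneg : ∀ s, 0 ≤ φ s) (hzero : ∀ s < (0 : ℝ), φ s = 0)
    (hint : Integrable φ)
    (Λ : ℝ) (hΛdef : Λ = ∫ s in Set.Ioi (0 : ℝ), φ s) (hΛpos : 0 < Λ)
    (hmom : IntegrableOn (fun s => s ^ q * φ s) (Set.Ioi (0 : ℝ))) :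
    ∃ C > 0, ∀ n : ℕ, 1 ≤ n → ∀ r : ℝ, 1 ≤ r →
      (∫ s in Set.Ioi r, Real.sqrt s * convPow φ n s)
        ≤ C * Λ ^ n * (n : ℝ) ^ q * r ^ ((1 : ℝ) / 2 - q) := by
  set M := ∫⁻ x, ENNReal.ofReal x ^ q ∂(volume.withDensity (‖φ ·‖ₑ)) with hMdef
  have hM : M ≠ ∞ := (lintegral_ofReal_rpow_withDensity_enorm_lt_top hmeas hzero hmom).ne
  refine ⟨(M.toReal + 1) / Λ, by positivity, fun n hn r hr => ?_⟩
  obtain ⟨m, rfl⟩ := Nat.exists_eq_add_of_le' hn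
  have hm : ((m : ℝ≥0∞) + 1) ^ q = ENNReal.ofReal (((m : ℝ) + 1) ^ q) := by
    rw [← ENNReal.ofReal_rpow_of_nonneg (by positivity) (by linarith)]
    norm_cast
  have htail := setLIntegral_Ioi_enorm_sqrt_mul_convPow_le hq hmeas (by linarith : 0 < r) m
  rw [withDensity_enorm_apply_univ hnonneg hzero hint.integrableOn, ← hΛdef, hm, ← hMdef,
    ← ENNReal.ofReal_toReal hM,
    ← ENNReal.ofReal_pow hΛpos.le, ← ENNReal.ofReal_mul (by positivity),
    ← ENNReal.ofReal_mul (by positivity), ← ENNReal.ofReal_mul (by positivity)] at htail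
  calc (∫ s in Ioi r, √s * convPow φ (m + 1) s)
      ≤ ‖∫ s in Ioi r, √s * convPow φ (m + 1) s‖ₑ.toReal := by
        rw [toReal_enorm]; exact Real.le_norm_self _
    _ ≤ r ^ ((1 : ℝ) / 2 - q) * (((m : ℝ) + 1) ^ q * Λ ^ m * M.toReal) :=
        ENNReal.toReal_le_of_le_ofReal (by positivity)
          ((enorm_integral_le_lintegral_enorm _).trans htail)
    _ ≤ r ^ ((1 : ℝ) / 2 - q) * (((m : ℝ) + 1) ^ q * Λ ^ m * (M.toReal + 1)) := by
        gcongr; linarith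
    _ = _ := by push_cast; field_simp; ring
end
end

section
/- Let φ : [0,∞) → [0,∞) be measurable with Λ := ∫₀^∞ φ(s) ds ∈ (0,∞). Then for every integer n ≥ 1 and every t ≥ 0: | ∫₀^t φ^{*n}(s) ds − Λⁿ | ≤ n·Λ^{n−1}·∫_{t/n}^∞ φ(s) ds. -/
/-!
`Λⁿ − ∫₀ᵗ φ^{*n}` is the tail `∫_t^∞ φ^{*n}`, i.e. `Λⁿ · P(X₁ + ⋯ + Xₙ > t)`. If
`X + Y > a + b` then `X > a` or `Y > b`; splitting `t = t/n + (n-1)t/n` and inducting on `n` gives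
the tail bound `n Λⁿ⁻¹ ∫_{t/n}^∞ φ`.
-/

open MeasureTheory

noncomputable section

open Set ContinuousLinearMap Convolution

section Convolution

variable {f g : ℝ → ℝ}

theorem convolution_mul_nonneg (hf : 0 ≤ f) (hg : 0 ≤ g) : 0 ≤ f ⋆[mul ℝ ℝ] g := fun x =>
  integral_nonneg fun s => mul_nonneg (hf s) (hg (x - s))

/-- If `x > a + b` then `s > a` or `x - s > b`, so the integrand of `(f ⋆ g) x` is dominated by
that of `(𝟙_{(a,∞)} f ⋆ g) x + (f ⋆ 𝟙_{(b,∞)} g) x`. -/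
theorem setIntegral_Ioi_add_convolution_le (hf : Integrable f) (hg : Integrable g)
    (hf0 : 0 ≤ f) (hg0 : 0 ≤ g) (a b : ℝ) :
    ∫ x in Ioi (a + b), (f ⋆[mul ℝ ℝ] g) x
      ≤ (∫ x in Ioi a, f x) * (∫ x, g x) + (∫ x, f x) * ∫ x in Ioi b, g x := by
  set fa := (Ioi a).indicator f
  set gb := (Ioi b).indicator g
  have hfa : Integrable fa := hf.indicator measurableSet_Ioi
  have hgb : Integrable gb := hg.indicator measurableSet_Ioi
  have hfa0 : 0 ≤ fa := indicator_nonneg fun x _ => hf0 x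
  have hgb0 : 0 ≤ gb := indicator_nonneg fun x _ => hg0 x
  have hsum : Integrable fun x => (fa ⋆[mul ℝ ℝ] g) x + (f ⋆[mul ℝ ℝ] gb) x :=
    (hfa.integrable_convolution _ hg).add (hf.integrable_convolution _ hgb)
  have hdom : ∀ᵐ x, x ∈ Ioi (a + b) →
      (f ⋆[mul ℝ ℝ] g) x ≤ (fa ⋆[mul ℝ ℝ] g) x + (f ⋆[mul ℝ ℝ] gb) x := by
    filter_upwards [hfa.ae_convolution_exists (mul ℝ ℝ) hg,
      hf.ae_convolution_exists (mul ℝ ℝ) hgb] with x hx₁ hx₂ hx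
    have h₁ : Integrable fun s => fa s * g (x - s) := hx₁
    have h₂ : Integrable fun s => f s * gb (x - s) := hx₂
    simp only [convolution_mul]
    rw [← integral_add h₁ h₂]
    refine integral_mono_of_nonneg (.of_forall fun s => mul_nonneg (hf0 s) (hg0 _))
      (h₁.add h₂) (.of_forall fun s => ?_)
    by_cases hs : s ∈ Ioi a
    · simp only [fa, indicator_of_mem hs]
      exact le_add_of_nonneg_right (mul_nonneg (hf0 s) (hgb0 _))
    · have hxs : x - s ∈ Ioi b := by simp only [mem_Ioi, not_lt] at hx hs ⊢; linarith
      simp only [gb, indicator_of_mem hxs]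
      exact le_add_of_nonneg_left (mul_nonneg (hfa0 s) (hg0 _))
  calc ∫ x in Ioi (a + b), (f ⋆[mul ℝ ℝ] g) x
      ≤ ∫ x in Ioi (a + b), (fa ⋆[mul ℝ ℝ] g) x + (f ⋆[mul ℝ ℝ] gb) x :=
        setIntegral_mono_on_ae (hf.integrable_convolution _ hg).integrableOn hsum.integrableOn
          measurableSet_Ioi hdom
    _ ≤ ∫ x, (fa ⋆[mul ℝ ℝ] g) x + (f ⋆[mul ℝ ℝ] gb) x :=
        setIntegral_le_integral hsum (.of_forall fun x =>
          add_nonneg (convolution_mul_nonneg hfa0 hg0 x) (convolution_mul_nonneg hf0 hgb0 x))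
    _ = (∫ x, fa x) * (∫ x, g x) + (∫ x, f x) * ∫ x, gb x := by
        rw [integral_add (hfa.integrable_convolution _ hg) (hf.integrable_convolution _ hgb),
          integral_convolution _ hfa hg, integral_convolution _ hf hgb]
        rfl
    _ = _ := by rw [integral_indicator measurableSet_Ioi, integral_indicator measurableSet_Ioi]

end Convolution

theorem intervalIntegral_mul_eq_convolution {φ ψ : ℝ → ℝ} (hφ : ∀ s < 0, φ s = 0)
    (hψ : ∀ s < 0, ψ s = 0) (t : ℝ) :
    ∫ s in (0 : ℝ)..t, ψ (t - s) * φ s = (φ ⋆[mul ℝ ℝ] ψ) t := by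
  have hvanish : ∀ s ∉ Icc 0 t, φ s * ψ (t - s) = 0 := fun s hs => by
    rcases lt_or_ge s 0 with h | h
    · rw [hφ s h, zero_mul]
    · rw [hψ (t - s) (by simp only [mem_Icc, not_and, not_le] at hs; linarith [hs h]), mul_zero]
  rw [convolution_mul, ← setIntegral_eq_integral_of_forall_compl_eq_zero hvanish]
  rcases le_or_gt 0 t with ht | ht
  · rw [integral_Icc_eq_integral_Ioc, intervalIntegral.integral_of_le ht]
    exact setIntegral_congr_fun measurableSet_Ioc fun s _ => mul_comm _ _
  · rw [Icc_eq_empty_of_lt ht, Measure.restrict_empty, integral_zero_measure]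
    refine intervalIntegral.integral_zero_ae (.of_forall fun s _ => ?_)
    rw [mul_comm, hvanish s (by simp [Icc_eq_empty_of_lt ht])]

theorem integral_eq_setIntegral_Ioi_of_neg_eq_zero {f : ℝ → ℝ} (hf : ∀ s < 0, f s = 0) :
    ∫ x, f x = ∫ x in Ioi 0, f x := by
  rw [← integral_Ici_eq_integral_Ioi,
    setIntegral_eq_integral_of_forall_compl_eq_zero fun x hx => hf x (by simpa using hx)]

section ConvPow

variable {φ : ℝ → ℝ}

/-- On `t < 0` the defining integral runs over `(t, 0]`, where `φ` vanishes except at `0`. -/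
theorem convPow_eq_zero_of_neg (hφ : ∀ s < 0, φ s = 0) :
    ∀ n, ∀ t < 0, convPow φ n t = 0
  | 0, _, _ => rfl
  | 1, t, ht => hφ t ht
  | n + 2, t, ht => by
    refine intervalIntegral.integral_zero_ae ?_
    filter_upwards [Measure.ae_ne volume (0 : ℝ)] with s hs0 hs
    rw [uIoc_of_ge ht.le] at hs
    rw [hφ s (lt_of_le_of_ne hs.2 hs0), mul_zero]

theorem convPow_add_two (hφ : ∀ s < 0, φ s = 0) (n : ℕ) :
    convPow φ (n + 2) = φ ⋆[mul ℝ ℝ] convPow φ (n + 1) :=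
  funext <| intervalIntegral_mul_eq_convolution hφ (convPow_eq_zero_of_neg hφ (n + 1))

variable (hφ : ∀ s < 0, φ s = 0)
include hφ

theorem convPow_nonneg (hφ0 : 0 ≤ φ) : ∀ n, 0 ≤ convPow φ n
  | 0 => le_rfl
  | 1 => hφ0
  | n + 2 => by
    rw [convPow_add_two hφ]
    exact convolution_mul_nonneg hφ0 (convPow_nonneg hφ0 (n + 1))

theorem integrable_convPow (hφi : Integrable φ) : ∀ n, Integrable (convPow φ n)
  | 0 => integrable_zero ℝ ℝ volume
  | 1 => hφi
  | n + 2 => by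
    rw [convPow_add_two hφ]
    exact hφi.integrable_convolution _ (integrable_convPow hφi (n + 1))

theorem integral_convPow (hφi : Integrable φ) :
    ∀ n, ∫ x, convPow φ (n + 1) x = (∫ x, φ x) ^ (n + 1)
  | 0 => (pow_one _).symm
  | n + 1 => by
    rw [convPow_add_two hφ, integral_convolution _ hφi (integrable_convPow hφ hφi (n + 1)),
      integral_convPow hφi n, pow_succ' _ (n + 1)]
    rfl

theorem setIntegral_Ioi_convPow_le (hφ0 : 0 ≤ φ) (hφi : Integrable φ) :
    ∀ (n : ℕ) (t : ℝ), ∫ x in Ioi t, convPow φ (n + 1) x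
      ≤ (n + 1) * (∫ x, φ x) ^ n * ∫ x in Ioi (t / (n + 1)), φ x
  | 0, t => by simp [convPow]
  | n + 1, t => by
    set a := t / (n + 2)
    have hsplit : t = a + (n + 1) * a := by simp only [a]; field_simp; ring
    have hIH := setIntegral_Ioi_convPow_le hφ0 hφi n ((n + 1) * a)
    rw [mul_div_cancel_left₀ a (by positivity)] at hIH
    calc ∫ x in Ioi t, convPow φ (n + 1 + 1) x
        ≤ (∫ x in Ioi a, φ x) * (∫ x, convPow φ (n + 1) x)
          + (∫ x, φ x) * ∫ x in Ioi ((n + 1) * a), convPow φ (n + 1) x := by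
          rw [convPow_add_two hφ, hsplit]
          exact setIntegral_Ioi_add_convolution_le hφi (integrable_convPow hφ hφi _) hφ0
            (convPow_nonneg hφ hφ0 _) _ _
      _ ≤ (∫ x in Ioi a, φ x) * (∫ x, φ x) ^ (n + 1)
          + (∫ x, φ x) * ((n + 1) * (∫ x, φ x) ^ n * ∫ x in Ioi a, φ x) := by
          rw [integral_convPow hφ hφi]
          gcongr
          exact integral_nonneg hφ0
      _ = (↑(n + 1) + 1) * (∫ x, φ x) ^ (n + 1) * ∫ x in Ioi (t / (↑(n + 1) + 1)), φ x := by
          rw [show ((n + 1 : ℕ) : ℝ) + 1 = n + 2 by push_cast; ring]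
          ring

end ConvPow

theorem stmt_14_general (φ : ℝ → ℝ)
    (hnonneg : ∀ s, 0 ≤ φ s) (hzero : ∀ s < (0 : ℝ), φ s = 0)
    (hint : Integrable φ)
    (Λ : ℝ) (hΛdef : Λ = ∫ s in Set.Ioi (0 : ℝ), φ s) :
    ∀ n : ℕ, 1 ≤ n → ∀ t : ℝ, 0 ≤ t →
      |(∫ s in (0 : ℝ)..t, convPow φ n s) - Λ ^ n|
        ≤ (n : ℝ) * Λ ^ (n - 1) * ∫ s in Set.Ioi (t / (n : ℝ)), φ s := by
  intro n hn t ht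
  obtain ⟨m, rfl⟩ := Nat.exists_eq_add_of_le' hn
  have hΛ : Λ = ∫ x, φ x := hΛdef.trans (integral_eq_setIntegral_Ioi_of_neg_eq_zero hzero).symm
  have hvanish := convPow_eq_zero_of_neg hzero (m + 1)
  have htail : Λ ^ (m + 1) - ∫ s in (0 : ℝ)..t, convPow φ (m + 1) s
      = ∫ s in Ioi t, convPow φ (m + 1) s := by
    rw [hΛ, ← integral_convPow hzero hint, integral_eq_setIntegral_Ioi_of_neg_eq_zero hvanish,
      ← intervalIntegral.integral_Ioi_sub_Ioi (integrable_convPow hzero hint _).integrableOn ht,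
      sub_sub_cancel]
  rw [abs_sub_comm, htail, abs_of_nonneg (setIntegral_nonneg measurableSet_Ioi fun x _ =>
    convPow_nonneg hzero hnonneg _ x)]
  simpa [hΛ] using setIntegral_Ioi_convPow_le hzero hnonneg hint m t

/-- if `Λ = ∫₀^∞ φ ∈ (0,∞)`, then for every `n ≥ 1` and `t ≥ 0`,
`|∫₀^t φ^{*n}(s) ds − Λⁿ| ≤ n·Λ^{n−1}·∫_{t/n}^∞ φ(s) ds`. -/
theorem stmt_14 (φ : ℝ → ℝ)
    (hmeas : Measurable φ) (hnonneg : ∀ s, 0 ≤ φ s) (hzero : ∀ s < (0 : ℝ), φ s = 0)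
    (hint : Integrable φ)
    (Λ : ℝ) (hΛdef : Λ = ∫ s in Set.Ioi (0 : ℝ), φ s) (hΛpos : 0 < Λ) :
    ∀ n : ℕ, 1 ≤ n → ∀ t : ℝ, 0 ≤ t →
      |(∫ s in (0 : ℝ)..t, convPow φ n s) - Λ ^ n|
        ≤ (n : ℝ) * Λ ^ (n - 1) * ∫ s in Set.Ioi (t / (n : ℝ)), φ s :=
  stmt_14_general φ hnonneg hzero hint Λ hΛdef
end
end
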